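/- arXiv:1403.7605 — 8 statements merged into one kernel-verified Lean document; each statement's English description precedes it below -/
import Mathlib

section
/- Let G be an n-resource selection game whose cost functions f_1, …, f_n are continuous (in addition to being nondecreasing). Then a strong Nash equilibrium exists in G. -/
/-!
A Nash equilibrium is a minimiser of Beckmann's potential `Φ s = ∑ⱼ ∫₀^{ℓⱼ} fⱼ` over the compact
set of profiles: moving mass of type `R` from `k` to `j` changes `Φ` at rate `h_j - h_k`, so at a
minimiser no used resource is dearer than another resource of the same type.

With nondecreasing costs every Nash equilibrium `s` is strong. In any deviation `s'` some type `R`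
raises its use of a resource `k` whose load does not drop (if no load rises, conservation of mass
forces all loads to stay put and some type to shift mass onto some `k`). Then `k` costs at least
`h_k ≥ h^R` in `s'`, so the deviation does not make `R` strictly better off on `k`.
-/

open scoped NNReal

namespace RSG

/-- A consumption profile in an `n`-resource selection game: each nonempty type
`R ⊆ [n]` distributes its mass `μ R` among the resources in `R`. -/
def IsProfile (n : ℕ) (μ : Finset (Fin n) → ℝ≥0) (s : Finset (Fin n) → Fin n → ℝ≥0) : Prop :=
  (∀ R : Finset (Fin n), ∀ j : Fin n, j ∉ R → s R j = 0) ∧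
  (∀ R : Finset (Fin n), R.Nonempty → ∑ j ∈ R, s R j = μ R)

/-- The load on resource `j` in profile `s`. -/
def load (n : ℕ) (s : Finset (Fin n) → Fin n → ℝ≥0) (j : Fin n) : ℝ≥0 :=
  ∑ R : Finset (Fin n), s R j

/-- The cost of resource `j` in profile `s`. -/
def cost (n : ℕ) (f : Fin n → ℝ≥0 → ℝ) (s : Finset (Fin n) → Fin n → ℝ≥0) (j : Fin n) : ℝ :=
  f j (load n s j)

/-- A Nash equilibrium. -/
def IsNash (n : ℕ) (f : Fin n → ℝ≥0 → ℝ) (μ : Finset (Fin n) → ℝ≥0)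
    (s : Finset (Fin n) → Fin n → ℝ≥0) : Prop :=
  IsProfile n μ s ∧
  ∀ R : Finset (Fin n), ∀ k ∈ R, 0 < s R k → ∀ j ∈ R, cost n f s k ≤ cost n f s j

/-- A strong Nash equilibrium: a Nash equilibrium `s` such that there is no
consumption profile `s' ≠ s` in which every player who strictly increases its
consumption of some resource `k` (i.e. `s' R k > s R k`) pays, at `k` in `s'`,
strictly less than the common equilibrium cost `h^R` of its type
(expressed via: less than `cost s j` for every `j` in the support of `s R`). -/
def IsStrong (n : ℕ) (f : Fin n → ℝ≥0 → ℝ) (μ : Finset (Fin n) → ℝ≥0)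
    (s : Finset (Fin n) → Fin n → ℝ≥0) : Prop :=
  IsNash n f μ s ∧
  ¬ ∃ s' : Finset (Fin n) → Fin n → ℝ≥0, IsProfile n μ s' ∧ s' ≠ s ∧
    ∀ R : Finset (Fin n), ∀ k : Fin n, s R k < s' R k →
      ∀ j : Fin n, 0 < s R j → cost n f s' k < cost n f s j

end RSG

open RSG

theorem IsMinOn.hasDerivAt_nonneg {φ : ℝ → ℝ} {a b d : ℝ} (hmin : IsMinOn φ (Set.Icc a b) a)
    (hab : a < b) (hφ : HasDerivAt φ d a) : 0 ≤ d := by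
  have hdir : b - a ∈ posTangentConeAt (Set.Icc a b) a :=
    mem_posTangentConeAt_of_segment_subset (by rw [add_sub_cancel, segment_eq_Icc hab.le])
  have := hmin.localize.hasFDerivWithinAt_nonneg hφ.hasFDerivAt.hasFDerivWithinAt hdir
  rw [ContinuousLinearMap.toSpanSingleton_apply, smul_eq_mul] at this
  exact nonneg_of_mul_nonneg_right this (sub_pos.2 hab)

namespace RSG

variable {n : ℕ} {μ : Finset (Fin n) → ℝ≥0} {s s' : Finset (Fin n) → Fin n → ℝ≥0}
  {R : Finset (Fin n)} {j k : Fin n} {t : ℝ≥0}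

namespace IsProfile

lemma mem_of_pos (hs : IsProfile n μ s) (h : 0 < s R k) : k ∈ R := by
  by_contra hk
  simp [hs.1 R k hk] at h

lemma le_mass (hs : IsProfile n μ s) (R : Finset (Fin n)) (k : Fin n) : s R k ≤ μ R := by
  by_cases hk : k ∈ R
  · rw [← hs.2 R ⟨k, hk⟩]
    exact Finset.single_le_sum (fun i _ => zero_le) hk
  · simp [hs.1 R k hk]

lemma sum_univ (hs : IsProfile n μ s) (R : Finset (Fin n)) :
    ∑ j, s R j = if R.Nonempty then μ R else 0 := by
  rw [← Finset.sum_subset (Finset.subset_univ R) fun j _ hj => hs.1 R j hj]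
  split_ifs with hR
  · exact hs.2 R hR
  · simp [Finset.not_nonempty_iff_eq_empty.1 hR]

lemma sum_univ_eq (hs : IsProfile n μ s) (hs' : IsProfile n μ s') (R : Finset (Fin n)) :
    ∑ j, s R j = ∑ j, s' R j := by
  rw [hs.sum_univ, hs'.sum_univ]

lemma sum_load_eq (hs : IsProfile n μ s) (hs' : IsProfile n μ s') :
    ∑ j, load n s j = ∑ j, load n s' j := by
  simp only [load]
  rw [Finset.sum_comm, Finset.sum_comm (f := fun j R => s' R j)]
  exact Finset.sum_congr rfl fun R _ => hs.sum_univ_eq hs' R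

lemma exists_pos_of_pos (hs : IsProfile n μ s) (hs' : IsProfile n μ s') (h : 0 < s' R k) :
    ∃ j, 0 < s R j := by
  by_contra! hzero
  have hrow : ∑ j, s' R j = 0 := by
    rw [← hs.sum_univ_eq hs', Finset.sum_eq_zero fun j _ => nonpos_iff_eq_zero.1 (hzero j)]
  simp [Finset.sum_eq_zero_iff.1 hrow k (Finset.mem_univ k)] at h

lemma exists_lt_of_ne (hs : IsProfile n μ s) (hs' : IsProfile n μ s') (hne : s ≠ s') :
    ∃ R k, s R k < s' R k ∧ load n s k ≤ load n s' k := by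
  by_cases hload : ∃ k, load n s k < load n s' k
  · obtain ⟨k, hk⟩ := hload
    obtain ⟨R, -, hR⟩ := Finset.exists_lt_of_sum_lt hk
    exact ⟨R, k, hR, hk.le⟩
  push Not at hload
  have hload_eq : ∀ k, load n s' k = load n s k := fun k =>
    (Finset.sum_eq_sum_iff_of_le fun k _ => hload k).1 (hs'.sum_load_eq hs) k (Finset.mem_univ k)
  obtain ⟨R, hR⟩ := Function.ne_iff.1 hne
  have hincr : ∃ k, s R k < s' R k := by
    by_contra! hle
    exact hR (funext fun k =>
      ((Finset.sum_eq_sum_iff_of_le fun k _ => hle k).1 (hs'.sum_univ_eq hs R) k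
        (Finset.mem_univ k)).symm)
  obtain ⟨k, hk⟩ := hincr
  exact ⟨R, k, hk, (hload_eq k).ge⟩

end IsProfile

theorem IsNash.isStrong {f : Fin n → ℝ≥0 → ℝ} (hmono : ∀ j, Monotone (f j))
    (hs : IsNash n f μ s) : IsStrong n f μ s := by
  refine ⟨hs, ?_⟩
  rintro ⟨s', hs', hne, hdev⟩
  obtain ⟨R, k, hlt, hload⟩ := hs.1.exists_lt_of_ne hs' (Ne.symm hne)
  have hk : 0 < s' R k := zero_le.trans_lt hlt
  obtain ⟨j, hj⟩ := hs.1.exists_pos_of_pos hs' hk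
  have h₁ : cost n f s' k < cost n f s j := hdev R k hlt j hj
  have h₂ : cost n f s j ≤ cost n f s k := hs.2 R j (hs.1.mem_of_pos hj) hj k (hs'.mem_of_pos hk)
  have h₃ : cost n f s k ≤ cost n f s' k := hmono k hload
  exact (h₁.trans_le (h₂.trans h₃)).false

lemma isCompact_setOf_isProfile (μ : Finset (Fin n) → ℝ≥0) :
    IsCompact {s | IsProfile n μ s} := by
  have hclosed : IsClosed {s | IsProfile n μ s} := by
    simp only [IsProfile, Set.ofPred_and, Set.ofPred_forall]
    exact .inter
      (isClosed_iInter fun R => isClosed_iInter fun j => isClosed_iInter fun _ =>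
        isClosed_eq (by fun_prop) continuous_const)
      (isClosed_iInter fun R => isClosed_iInter fun _ => isClosed_eq (by fun_prop) continuous_const)
  refine (isCompact_univ_pi fun R => isCompact_univ_pi fun _ => isCompact_Icc (a := 0) (b := μ R))
    |>.of_isClosed_subset hclosed fun s hs => ?_
  simp only [Set.mem_univ_pi, Set.mem_Icc]
  exact fun R k => ⟨zero_le, hs.le_mass R k⟩

lemma exists_isProfile (μ : Finset (Fin n) → ℝ≥0) : ∃ s, IsProfile n μ s := by
  refine ⟨fun R => if h : R.Nonempty then Pi.single (R.min' h) (μ R) else 0, fun R j hj => ?_,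
    fun R hR => ?_⟩
  · dsimp only
    split_ifs with h
    · exact Pi.single_eq_of_ne (ne_of_mem_of_not_mem (R.min'_mem h) hj).symm _
    · rfl
  · simp [hR, Finset.sum_pi_single', R.min'_mem hR]

/-- Move mass `t` of type `R` from resource `k` to resource `j`. -/
def transfer (s : Finset (Fin n) → Fin n → ℝ≥0) (R : Finset (Fin n)) (k j : Fin n) (t : ℝ≥0) :
    Finset (Fin n) → Fin n → ℝ≥0 :=
  Function.update s R (Function.update (Function.update (s R) k (s R k - t)) j (s R j + t))

lemma coe_transfer_apply (hkj : k ≠ j) (ht : t ≤ s R k) (R' : Finset (Fin n)) (i : Fin n) :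
    (transfer s R k j t R' i : ℝ) =
      s R' i + if R' = R then t * (Pi.single j 1 - Pi.single k 1 : Fin n → ℝ) i else 0 := by
  unfold transfer
  by_cases hR : R' = R
  · subst hR
    by_cases hij : i = j
    · subst hij; simp [hkj.symm]
    by_cases hik : i = k
    · subst hik; simp [hij, NNReal.coe_sub ht, sub_eq_add_neg]
    · simp [hij, hik]
  · simp [hR]

lemma IsProfile.transfer (hs : IsProfile n μ s) (hk : k ∈ R) (hj : j ∈ R) (hkj : k ≠ j)
    (ht : t ≤ s R k) : IsProfile n μ (transfer s R k j t) := by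
  refine ⟨fun R' i hi => ?_, fun R' hR' => ?_⟩
  · rw [← NNReal.coe_eq_zero, coe_transfer_apply hkj ht, hs.1 R' i hi]
    split_ifs with hR
    · subst hR
      simp [(ne_of_mem_of_not_mem hj hi).symm, (ne_of_mem_of_not_mem hk hi).symm]
    · simp
  · rw [← NNReal.coe_inj, NNReal.coe_sum]
    simp_rw [coe_transfer_apply hkj ht]
    rw [Finset.sum_add_distrib, ← NNReal.coe_sum, hs.2 R' hR']
    split_ifs with hR
    · subst hR
      simp [← Finset.mul_sum, Finset.sum_sub_distrib, Finset.sum_pi_single', hj, hk]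
    · simp

lemma coe_load_transfer (hkj : k ≠ j) (ht : t ≤ s R k) (i : Fin n) :
    (load n (transfer s R k j t) i : ℝ) =
      load n s i + t * (Pi.single j 1 - Pi.single k 1 : Fin n → ℝ) i := by
  simp only [load, NNReal.coe_sum, coe_transfer_apply hkj ht, Finset.sum_add_distrib,
    Finset.sum_ite_eq', Finset.mem_univ, if_true]

noncomputable def potential (f : Fin n → ℝ≥0 → ℝ) (s : Finset (Fin n) → Fin n → ℝ≥0) : ℝ :=
  ∑ j, ∫ x in (0 : ℝ)..load n s j, f j x.toNNReal

lemma continuous_potential {f : Fin n → ℝ≥0 → ℝ} (hcont : ∀ j, Continuous (f j)) :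
    Continuous (potential f) := by
  unfold potential load
  refine continuous_finsetSum _ fun j _ => ?_
  have hprim : Continuous fun y : ℝ => ∫ x in (0 : ℝ)..y, f j x.toNNReal :=
    intervalIntegral.continuous_primitive
      (fun a b => ((hcont j).comp continuous_real_toNNReal).intervalIntegrable a b) 0
  exact hprim.comp (by fun_prop)

lemma isNash_of_isMinOn_potential {f : Fin n → ℝ≥0 → ℝ}
    (hcont : ∀ j, Continuous (f j)) (hs : IsProfile n μ s)
    (hmin : IsMinOn (potential f) {s | IsProfile n μ s} s) : IsNash n f μ s := by
  refine ⟨hs, fun R k hk hpos j hj => ?_⟩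
  rcases eq_or_ne k j with rfl | hkj
  · exact le_rfl
  set c : Fin n → ℝ := Pi.single j 1 - Pi.single k 1
  -- `φ τ` is the potential after moving mass `τ` of type `R` from `k` to `j`.
  let φ : ℝ → ℝ := fun τ => ∑ i, ∫ x in (0 : ℝ)..load n s i + τ * c i, f i x.toNNReal
  have hφ : HasDerivAt φ (∑ i, f i (load n s i) * c i) 0 := by
    refine HasDerivAt.fun_sum fun i _ => ?_
    have hprim : HasDerivAt (fun y => ∫ x in (0 : ℝ)..y, f i x.toNNReal) (f i (load n s i))
        (load n s i + 0 * c i) := by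
      simpa using (((hcont i).comp continuous_real_toNNReal).integral_hasStrictDerivAt 0
        (load n s i)).hasDerivAt
    exact hprim.comp 0 ((hasDerivAt_mul_const (c i)).const_add (load n s i : ℝ))
  have hrate : ∑ i, f i (load n s i) * c i = cost n f s j - cost n f s k := by
    simp [c, cost, mul_sub, Finset.sum_sub_distrib, Pi.single_apply]
  have hφmin : IsMinOn φ (Set.Icc 0 (s R k)) 0 := by
    intro τ hτ
    lift τ to ℝ≥0 using hτ.1
    have hτ' : τ ≤ s R k := hτ.2
    have h₀ : φ 0 = potential f s := by simp [φ, potential]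
    have h₁ : φ τ = potential f (transfer s R k j τ) := by
      simp [φ, c, potential, coe_load_transfer hkj hτ']
    simpa [h₀, h₁] using hmin (hs.transfer hk hj hkj hτ')
  linarith [hφmin.hasDerivAt_nonneg hpos hφ]

theorem exists_isNash {f : Fin n → ℝ≥0 → ℝ} (μ : Finset (Fin n) → ℝ≥0)
    (hcont : ∀ j, Continuous (f j)) : ∃ s, IsNash n f μ s := by
  obtain ⟨s, hs, hmin⟩ := (isCompact_setOf_isProfile μ).exists_isMinOn (exists_isProfile μ)
    (continuous_potential hcont).continuousOn
  exact ⟨s, isNash_of_isMinOn_potential hcont hs hmin⟩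

end RSG

theorem exists_strong_nash_general (n : ℕ) (f : Fin n → ℝ≥0 → ℝ)
    (μ : Finset (Fin n) → ℝ≥0)
    (hmono : ∀ j, Monotone (f j)) (hcont : ∀ j, Continuous (f j)) :
    ∃ s : Finset (Fin n) → Fin n → ℝ≥0, IsStrong n f μ s := by
  obtain ⟨s, hs⟩ := exists_isNash μ hcont
  exact ⟨s, hs.isStrong hmono⟩

/-- In every `n`-resource selection game with continuous
(nondecreasing) cost functions, a strong Nash equilibrium exists. -/
theorem exists_strong_nash (n : ℕ) (hn : 0 < n) (f : Fin n → ℝ≥0 → ℝ)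
    (μ : Finset (Fin n) → ℝ≥0)
    (hmono : ∀ j, Monotone (f j)) (hcont : ∀ j, Continuous (f j)) :
    ∃ s : Finset (Fin n) → Fin n → ℝ≥0, IsStrong n f μ s :=
  exists_strong_nash_general n f μ hmono hcont
end

section
/- Let G be an n-resource selection game (with nondecreasing, not necessarily continuous, cost functions). For every resource j ∈ {1,…,n} and every two Nash equilibria s and s' of G, the costs coincide: h_j^s = h_j^{s'}. -/
open scoped NNReal

open RSG

/-! Freezing the costs of a Nash equilibrium `s`, its loads minimise the linear cost: for every
consumption profile `t`, `∑ⱼ hⱼˢ ℓⱼˢ ≤ ∑ⱼ hⱼˢ ℓⱼᵗ`, since each type only uses its cheapest resources.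
Adding this inequality for two equilibria `s, s'` and the other's profile gives
`∑ⱼ (hⱼˢ - hⱼˢ') (ℓⱼˢ - ℓⱼˢ') ≤ 0`. By monotonicity of the cost functions every summand is
nonnegative, hence zero: at each resource either the costs or the loads agree, and equal
loads give equal costs. -/

namespace RSG

variable {n : ℕ} {f : Fin n → ℝ≥0 → ℝ} {μ : Finset (Fin n) → ℝ≥0}
  {s t : Finset (Fin n) → Fin n → ℝ≥0}

lemma IsProfile.sum_mul_load (ht : IsProfile n μ t) (c : Fin n → ℝ) :
    ∑ j, c j * load n t j = ∑ R, ∑ j ∈ R, c j * t R j := by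
  simp only [load, NNReal.coe_sum, Finset.mul_sum]
  rw [Finset.sum_comm]
  refine Finset.sum_congr rfl fun R _ => (Finset.sum_subset (Finset.subset_univ R) ?_).symm
  intro j _ hj
  simp [ht.1 R j hj]

lemma IsNash.sum_cost_mul_le (hs : IsNash n f μ s) (ht : IsProfile n μ t) (R : Finset (Fin n)) :
    ∑ j ∈ R, cost n f s j * s R j ≤ ∑ j ∈ R, cost n f s j * t R j := by
  rcases R.eq_empty_or_nonempty with rfl | hR
  · simp
  set m := R.inf' hR (cost n f s)
  have used_at_min : ∀ j ∈ R, cost n f s j * s R j = m * s R j := by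
    intro j hj
    rcases eq_zero_or_pos (s R j) with hz | hpos
    · simp [hz]
    · rw [le_antisymm (Finset.le_inf' hR _ (hs.2 R j hj hpos)) (Finset.inf'_le _ hj)]
  calc ∑ j ∈ R, cost n f s j * s R j
      = m * μ R := by
        rw [Finset.sum_congr rfl used_at_min, ← Finset.mul_sum, ← NNReal.coe_sum, hs.1.2 R hR]
    _ = ∑ j ∈ R, m * t R j := by rw [← Finset.mul_sum, ← NNReal.coe_sum, ht.2 R hR]
    _ ≤ ∑ j ∈ R, cost n f s j * t R j :=
        Finset.sum_le_sum fun j hj => mul_le_mul_of_nonneg_right (Finset.inf'_le _ hj) (by simp)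

lemma IsNash.sum_cost_mul_load_le (hs : IsNash n f μ s) (ht : IsProfile n μ t) :
    ∑ j, cost n f s j * load n s j ≤ ∑ j, cost n f s j * load n t j := by
  rw [hs.1.sum_mul_load, ht.sum_mul_load]
  exact Finset.sum_le_sum fun R _ => hs.sum_cost_mul_le ht R

lemma IsNash.sum_cost_sub_mul_load_sub_nonpos (hs : IsNash n f μ s) (ht : IsNash n f μ t) :
    ∑ j, (cost n f s j - cost n f t j) * ((load n s j : ℝ) - load n t j) ≤ 0 := by
  have hst := hs.sum_cost_mul_load_le ht.1
  have hts := ht.sum_cost_mul_load_le hs.1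
  have expand : ∑ j, (cost n f s j - cost n f t j) * ((load n s j : ℝ) - load n t j) =
      (∑ j, cost n f s j * load n s j - ∑ j, cost n f s j * load n t j) +
        (∑ j, cost n f t j * load n t j - ∑ j, cost n f t j * load n s j) := by
    simp only [← Finset.sum_sub_distrib, ← Finset.sum_add_distrib]
    exact Finset.sum_congr rfl fun j _ => by ring
  linarith

end RSG

/-- In every `n`-resource selection game (nondecreasing, not
necessarily continuous, cost functions), the cost of each resource is the same
in all Nash equilibria. -/
theorem nash_cost_unique (n : ℕ) (f : Fin n → ℝ≥0 → ℝ)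
    (μ : Finset (Fin n) → ℝ≥0) (hmono : ∀ j, Monotone (f j))
    (s s' : Finset (Fin n) → Fin n → ℝ≥0)
    (hs : IsNash n f μ s) (hs' : IsNash n f μ s') (j : Fin n) :
    cost n f s j = cost n f s' j := by
  have term_nonneg : ∀ i ∈ Finset.univ,
      0 ≤ (cost n f s i - cost n f s' i) * ((load n s i : ℝ) - load n s' i) := fun i _ =>
    ((hmono i).monovary NNReal.coe_mono).sub_mul_sub_nonneg (load n s' i) (load n s i)
  have term_zero := (Finset.sum_eq_zero_iff_of_nonneg term_nonneg).mp
    (le_antisymm (hs.sum_cost_sub_mul_load_sub_nonpos hs') (Finset.sum_nonneg term_nonneg))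
    j (Finset.mem_univ j)
  rcases mul_eq_zero.mp term_zero with h | h
  · exact sub_eq_zero.mp h
  · have hload : load n s j = load n s' j := by exact_mod_cast sub_eq_zero.mp h
    simp only [cost, hload]
end

section
/- Let G be an n-resource/k-player-type resource selection game with I.D.-dependent weighting. If the cost functions f_1, …, f_n and all the weighting functions f^i_j are continuous, then a strong Nash equilibrium exists in G. -/
/-!
Perturb the costs to `f j x + ε x`, which are strictly increasing. Among all profiles, take one
whose vector of resource costs, sorted decreasingly, is lexicographically least (it exists by
compactness and continuity). Moving a little mass onto a cheaper resource, or lowering some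
loads, would decrease that sorted vector, so this profile is an equilibrium of the perturbed
game whose load vector is Pareto-minimal. As `ε → 0`, a limit point of these profiles is an
equilibrium of the original game, and it is strong: the deviators of a blocking coalition only
increase their use of resources whose load they strictly lower, so the deviation transplanted
onto a nearby perturbed equilibrium would lower its load vector.
-/

open scoped NNReal

namespace IDG

/-- A consumption profile in an `n`-resource/`k`-player-type resource selection
game with I.D.-dependent weighting: each player type `i` distributes its unit
mass among the resources in its allowed set `R i`. -/
def IsProfile (n k : ℕ) (R : Fin k → Finset (Fin n)) (s : Fin k → Fin n → ℝ≥0) : Prop :=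
  (∀ i : Fin k, ∀ j : Fin n, j ∉ R i → s i j = 0) ∧
  (∀ i : Fin k, ∑ j ∈ R i, s i j = 1)

/-- The weighted load on resource `j`, where `w i j` is the weighting function
of player type `i` on resource `j`. -/
def load (n k : ℕ) (R : Fin k → Finset (Fin n)) (w : Fin k → Fin n → ℝ≥0 → ℝ≥0)
    (s : Fin k → Fin n → ℝ≥0) (j : Fin n) : ℝ≥0 :=
  ∑ i ∈ Finset.univ.filter (fun i : Fin k => j ∈ R i), w i j (s i j)

/-- The cost of resource `j`. -/
def cost (n k : ℕ) (f : Fin n → ℝ≥0 → ℝ) (R : Fin k → Finset (Fin n))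
    (w : Fin k → Fin n → ℝ≥0 → ℝ≥0) (s : Fin k → Fin n → ℝ≥0) (j : Fin n) : ℝ :=
  f j (load n k R w s j)

/-- A Nash equilibrium. -/
def IsNash (n k : ℕ) (f : Fin n → ℝ≥0 → ℝ) (R : Fin k → Finset (Fin n))
    (w : Fin k → Fin n → ℝ≥0 → ℝ≥0) (s : Fin k → Fin n → ℝ≥0) : Prop :=
  IsProfile n k R s ∧
  ∀ i : Fin k, ∀ l : Fin n, 0 < s i l → ∀ j ∈ R i,
    cost n k f R w s l ≤ cost n k f R w s j

/-- A strong Nash equilibrium: a Nash equilibrium `s` such that there is no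
consumption profile `s' ≠ s` in which every player type that strictly increases
its consumption of some resource `m` (i.e. `s' i m > s i m`) pays, at `m` in
`s'`, strictly less than the common equilibrium cost `h^i` of its type
(expressed via: less than `cost s l` for every `l` in the support of `s i`). -/
def IsStrong (n k : ℕ) (f : Fin n → ℝ≥0 → ℝ) (R : Fin k → Finset (Fin n))
    (w : Fin k → Fin n → ℝ≥0 → ℝ≥0) (s : Fin k → Fin n → ℝ≥0) : Prop :=
  IsNash n k f R w s ∧
  ¬ ∃ s' : Fin k → Fin n → ℝ≥0, IsProfile n k R s' ∧ s' ≠ s ∧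
    ∀ i : Fin k, ∀ m : Fin n, s i m < s' i m →
      ∀ l : Fin n, 0 < s i l → cost n k f R w s' m < cost n k f R w s l

end IDG

open IDG
open Finset Filter Topology

section LexOrder

variable {α : Type*} [LinearOrder α] {n : ℕ}

theorem Pi.toLex_lt_of_le_of_lt {x y : Fin n → α} {r : Fin n} (hle : ∀ q ≤ r, x q ≤ y q)
    (hr : x r < y r) : toLex x < toLex y := by
  refine lt_of_not_ge fun hyx => ?_
  rcases hyx.eq_or_lt with hxy | ⟨i, hi, hlt⟩
  · exact hr.ne (congrFun (toLex.injective hxy) r).symm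
  · rcases le_or_gt i r with hir | hri
    · exact (hle i hir).not_gt hlt
    · exact hr.ne' (hi r hri)

variable [TopologicalSpace α] [OrderClosedTopology α]

theorem IsCompact.exists_isMinOn_toLex {K : Set (Fin n → α)} (hK : IsCompact K)
    (hne : K.Nonempty) : ∃ x ∈ K, IsMinOn toLex K x := by
  induction n with
  | zero =>
    obtain ⟨x, hx⟩ := hne
    exact ⟨x, hx, fun y _ => (congrArg toLex (Subsingleton.elim x y)).le⟩
  | succ n ih =>
    obtain ⟨x₀, hx₀K, hx₀⟩ := hK.exists_isMinOn hne (continuous_apply 0).continuousOn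
    have hK₀ : IsCompact (K ∩ {y | y 0 = x₀ 0}) :=
      hK.inter_right (isClosed_eq (continuous_apply 0) continuous_const)
    have htail : Continuous fun x : Fin (n + 1) → α => Fin.tail x :=
      continuous_pi fun i => continuous_apply i.succ
    obtain ⟨_, ⟨x, ⟨hxK, hx0⟩, rfl⟩, hx⟩ :=
      ih (hK₀.image htail) ⟨_, ⟨x₀, ⟨hx₀K, rfl⟩, rfl⟩⟩
    refine ⟨x, hxK, fun y hy => show toLex x ≤ toLex y from le_of_not_gt ?_⟩
    rintro ⟨i, hi, hlt⟩
    induction i using Fin.cases with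
    | zero => exact (hx0.trans_le (hx₀ hy)).not_gt hlt
    | succ i =>
      have hy0 : y 0 = x₀ 0 := (hi 0 (Fin.succ_pos i)).trans hx0
      have hmin : toLex (Fin.tail x) ≤ toLex (Fin.tail y) := hx ⟨y, ⟨hy, hy0⟩, rfl⟩
      exact hmin.not_gt ⟨i, fun j hj => hi j.succ (Fin.succ_lt_succ_iff.2 hj), hlt⟩

end LexOrder

section SortDesc

variable {α : Type*} [LinearOrder α] {n : ℕ}

/-- The `(r + 1)`-st largest entry of `c` (so `r = 0` gives the maximum). -/
noncomputable def sortDesc (c : Fin n → α) (r : Fin n) : α :=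
  univ.sup' (univ_nonempty_iff.2 ⟨Fin.castLEEmb r.isLt⟩) fun e : Fin (r + 1) ↪ Fin n =>
    univ.inf' univ_nonempty (c ∘ e)

theorem lt_sortDesc_iff {c : Fin n → α} {r : Fin n} {t : α} :
    t < sortDesc c r ↔ r.1 + 1 ≤ #{j | t < c j} := by
  have hemb : (∃ e : Fin (r + 1) ↪ Fin n, ∀ i, t < c (e i)) ↔
      Nonempty (Fin (r + 1) ↪ {j // t < c j}) :=
    ⟨fun ⟨e, he⟩ => ⟨e.codRestrict {j | t < c j} he⟩,
      fun ⟨e⟩ => ⟨e.trans (Function.Embedding.subtype _), fun i => (e i).2⟩⟩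
  simp only [sortDesc, lt_sup'_iff, lt_inf'_iff, mem_univ, true_and, forall_const,
    Function.comp_apply]
  rw [hemb, Function.Embedding.nonempty_iff_card_le, Fintype.card_fin, Fintype.card_subtype]

theorem continuous_sortDesc [TopologicalSpace α] [OrderClosedTopology α] (r : Fin n) :
    Continuous fun c : Fin n → α => sortDesc c r :=
  Continuous.finset_sup'_apply _ fun e _ =>
    Continuous.finset_inf'_apply _ fun i _ => continuous_apply (e i)

theorem toLex_sortDesc_lt {c d : Fin n → α} {u : α} {l : Fin n}
    (hcd : ∀ x, u < c x → c x ≤ d x) (hl : c l ≤ u) (hu : u < d l) :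
    toLex (sortDesc c) < toLex (sortDesc d) := by
  have hlmem : l ∈ ({x | u < d x} : Finset (Fin n)) := by simpa using hu
  have hpos : 0 < #{x | u < d x} := card_pos.2 ⟨l, hlmem⟩
  have hlen : #{x | u < d x} ≤ n := (card_le_univ _).trans (Fintype.card_fin n).le
  let r : Fin n := ⟨#{x | u < d x} - 1, by omega⟩
  have hdr : u < sortDesc d r := lt_sortDesc_iff.2 (by simp only [r]; omega)
  have hcr : sortDesc c r ≤ u := by
    refine le_of_not_gt fun h => ?_
    have hsub : filter (fun x => u < c x) univ ⊂ filter (fun x => u < d x) univ := by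
      refine ssubset_iff_of_subset (fun x hx => ?_) |>.2 ⟨l, hlmem, by simpa using hl⟩
      simp only [mem_filter, mem_univ, true_and] at hx ⊢
      exact hx.trans_le (hcd x hx)
    have := card_lt_card hsub
    have := lt_sortDesc_iff.1 h
    simp only [r] at this
    omega
  refine Pi.toLex_lt_of_le_of_lt (r := r) (fun q hq => le_of_forall_lt fun t ht => ?_)
    (hcr.trans_lt hdr)
  rw [lt_sortDesc_iff] at ht ⊢
  rcases le_or_gt u t with hut | htu
  · refine ht.trans (card_le_card fun x hx => ?_)
    simp only [mem_filter, mem_univ, true_and] at hx ⊢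
    exact hx.trans_le (hcd x (hut.trans_lt hx))
  · have hq : q.1 ≤ r.1 := hq
    have : #{x | u < d x} ≤ #{x | t < d x} := card_le_card fun x hx => by
      simp only [mem_filter, mem_univ, true_and] at hx ⊢
      exact htu.trans hx
    simp only [r] at hq
    omega

theorem toLex_sortDesc_strictMono : StrictMono fun c : Fin n → α => toLex (sortDesc c) := by
  intro c d hcd
  obtain ⟨l, hl⟩ := (Pi.lt_def.1 hcd).2
  exact toLex_sortDesc_lt (fun x _ => hcd.le x) le_rfl hl

end SortDesc

section Distribution

variable {ι : Type*} {A : Finset ι} {x x₀ : ι → ℝ≥0}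

def IsDistribOn (A : Finset ι) (x : ι → ℝ≥0) : Prop :=
  (∀ j ∉ A, x j = 0) ∧ ∑ j ∈ A, x j = 1

theorem isDistribOn_single [DecidableEq ι] {j : ι} (hj : j ∈ A) :
    IsDistribOn A (Pi.single j 1) := by
  refine ⟨fun j' hj' => Pi.single_eq_of_ne (ne_of_mem_of_not_mem hj hj').symm _, ?_⟩
  rw [sum_pi_single', if_pos hj]

namespace IsDistribOn

theorem le_one (hx : IsDistribOn A x) (j : ι) : x j ≤ 1 := by
  by_cases hj : j ∈ A
  · exact hx.2 ▸ single_le_sum (fun _ _ => zero_le) hj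
  · simp [hx.1 j hj]

theorem mem_of_pos (hx : IsDistribOn A x) {j : ι} (hj : 0 < x j) : j ∈ A :=
  by_contra fun h => hj.ne' (hx.1 j h)

theorem exists_pos (hx : IsDistribOn A x) : ∃ j, 0 < x j := by
  obtain ⟨j, -, hj⟩ := exists_ne_zero_of_sum_ne_zero (hx.2 ▸ one_ne_zero)
  exact ⟨j, pos_iff_ne_zero.2 hj⟩

theorem exists_lt_of_ne (hx : IsDistribOn A x) (hx₀ : IsDistribOn A x₀) (hne : x ≠ x₀) :
    ∃ j, x₀ j < x j := by
  by_contra! hle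
  refine hne (funext fun j => ?_)
  by_cases hj : j ∈ A
  · exact (sum_eq_sum_iff_of_le fun j _ => hle j).1 (hx.2.trans hx₀.2.symm) j hj
  · rw [hx.1 j hj, hx₀.1 j hj]

theorem update_sub_add [DecidableEq ι] (hx : IsDistribOn A x) {l j : ι} (hl : l ∈ A)
    (hj : j ∈ A) (hjl : j ≠ l) {θ : ℝ≥0} (hθ : θ ≤ x l) :
    IsDistribOn A (Function.update (Function.update x l (x l - θ)) j (x j + θ)) := by
  refine ⟨fun j' hj' => ?_, ?_⟩
  · rw [Function.update_of_ne (ne_of_mem_of_not_mem hj hj').symm,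
      Function.update_of_ne (ne_of_mem_of_not_mem hl hj').symm, hx.1 j' hj']
  · have hpt : ∀ j', Function.update (Function.update x l (x l - θ)) j (x j + θ) j' +
        (Pi.single l θ : ι → ℝ≥0) j' = x j' + (Pi.single j θ : ι → ℝ≥0) j' := by
      intro j'
      by_cases h₁ : j' = j
      · subst h₁; simp [hjl]
      by_cases h₂ : j' = l
      · subst h₂; simp [h₁, tsub_add_cancel_of_le hθ]
      · simp [h₁, h₂]
    have hsum := sum_congr rfl fun j' (_ : j' ∈ A) => hpt j'
    rw [sum_add_distrib, sum_add_distrib, sum_pi_single', sum_pi_single', if_pos hl, if_pos hj,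
      hx.2] at hsum
    exact add_right_cancel hsum

theorem exists_tendsto_le {β : Type*} {l : Filter β} {y : β → ι → ℝ≥0}
    (hx : IsDistribOn A x) (hx₀ : IsDistribOn A x₀) (hy : ∀ b, IsDistribOn A (y b))
    (hlim : Tendsto y l (𝓝 x₀)) :
    ∃ z : β → ι → ℝ≥0, (∀ b, IsDistribOn A (z b)) ∧ Tendsto z l (𝓝 x) ∧
      ∀ b j, x j ≤ x₀ j → z b j ≤ y b j := by
  classical
  by_cases hne : x = x₀
  · subst hne
    exact ⟨y, hy, hlim, fun _ _ _ => le_rfl⟩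
  obtain ⟨j₀, hj₀⟩ := hx.exists_lt_of_ne hx₀ hne
  have hj₀A : j₀ ∈ A := hx.mem_of_pos (pos_of_gt hj₀)
  -- keep `x` where it exceeds `x₀`, cap `y` by `x` elsewhere, and put the missing mass on `j₀`
  let base : β → ι → ℝ≥0 := fun b j => if x₀ j < x j then x j else min (y b j) (x j)
  have hbase_le : ∀ b j, base b j ≤ x j := fun b j => by
    by_cases h : x₀ j < x j <;> simp [base, h]
  have hbase : Tendsto base l (𝓝 x) := tendsto_pi_nhds.2 fun j => by
    by_cases h : x₀ j < x j
    · simpa [base, h] using tendsto_const_nhds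
    · simpa [base, h, min_eq_right (not_lt.1 h)] using
        (tendsto_pi_nhds.1 hlim j).min (tendsto_const_nhds (x := x j))
  have hrest : Tendsto (fun b => 1 - ∑ j ∈ A, base b j) l (𝓝 0) := by
    simpa [hx.2] using (tendsto_const_nhds (x := (1 : ℝ≥0))).sub (tendsto_finsetSum A fun j _ =>
      tendsto_pi_nhds.1 hbase j)
  refine ⟨fun b => base b + Pi.single j₀ (1 - ∑ j ∈ A, base b j), fun b => ⟨fun j hj => ?_, ?_⟩,
    ?_, fun b j hj => ?_⟩
  · have hxj : x j = 0 := hx.1 j hj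
    simp [base, hxj, Pi.single_eq_of_ne (ne_of_mem_of_not_mem hj₀A hj).symm]
  · simp only [Pi.add_apply]
    rw [sum_add_distrib, sum_pi_single', if_pos hj₀A,
      add_tsub_cancel_of_le ((sum_le_sum fun j _ => hbase_le b j).trans hx.2.le)]
  · simpa using hbase.add ((continuous_single j₀).tendsto _ |>.comp hrest)
  · have hj₀j : j ≠ j₀ := by rintro rfl; exact hj.not_gt hj₀
    simp [base, hj.not_gt, hj₀j]

end IsDistribOn

end Distribution

namespace IDG

variable {n k : ℕ} {f : Fin n → ℝ≥0 → ℝ} {R : Fin k → Finset (Fin n)}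
  {w : Fin k → Fin n → ℝ≥0 → ℝ≥0} {s s₀ s' : Fin k → Fin n → ℝ≥0}

def IsLoadMinimal (R : Fin k → Finset (Fin n)) (w : Fin k → Fin n → ℝ≥0 → ℝ≥0)
    (s : Fin k → Fin n → ℝ≥0) : Prop :=
  ∀ u, IsProfile n k R u → ¬ load n k R w u < load n k R w s

theorem isProfile_iff : IsProfile n k R s ↔ ∀ i, IsDistribOn (R i) (s i) := by
  simp only [IsProfile, IsDistribOn, forall_and]

theorem IsProfile.le_one (hs : IsProfile n k R s) (i : Fin k) (j : Fin n) : s i j ≤ 1 :=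
  (isProfile_iff.1 hs i).le_one j

theorem isClosed_setOf_isProfile : IsClosed {s : Fin k → Fin n → ℝ≥0 | IsProfile n k R s} := by
  simp only [IsProfile, Set.ofPred_and, Set.ofPred_forall]
  exact (isClosed_iInter fun i => isClosed_iInter fun j => isClosed_iInter fun _ =>
      isClosed_eq (by fun_prop) continuous_const).inter
    (isClosed_iInter fun i => isClosed_eq (by fun_prop) continuous_const)

theorem isCompact_setOf_isProfile :
    IsCompact {s : Fin k → Fin n → ℝ≥0 | IsProfile n k R s} :=
  isCompact_Icc.of_isClosed_subset isClosed_setOf_isProfile fun _ hs =>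
    ⟨fun _ _ => zero_le, fun i j => hs.le_one i j⟩

theorem nonempty_setOf_isProfile (hR : ∀ i, (R i).Nonempty) :
    {s : Fin k → Fin n → ℝ≥0 | IsProfile n k R s}.Nonempty := by
  classical
  exact ⟨fun i => Pi.single (hR i).choose 1,
    isProfile_iff.2 fun i => isDistribOn_single (hR i).choose_spec⟩

theorem continuousOn_load (hwc : ∀ i : Fin k, ∀ j ∈ R i, ContinuousOn (w i j) (Set.Iic 1))
    (j : Fin n) :
    ContinuousOn (fun s => load n k R w s j) {s | IsProfile n k R s} :=
  continuousOn_finsetSum _ fun i hi => (hwc i j (mem_filter.1 hi).2).comp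
    (by fun_prop) fun _ hs => Set.mem_Iic.2 (IsProfile.le_one hs i j)

theorem tendsto_load (hwc : ∀ i : Fin k, ∀ j ∈ R i, ContinuousOn (w i j) (Set.Iic 1))
    {β : Type*} {l : Filter β} {s : β → Fin k → Fin n → ℝ≥0}
    (hs : ∀ᶠ b in l, IsProfile n k R (s b)) (hs₀ : IsProfile n k R s₀)
    (hlim : Tendsto s l (𝓝 s₀)) (j : Fin n) :
    Tendsto (fun b => load n k R w (s b) j) l (𝓝 (load n k R w s₀ j)) :=
  ((continuousOn_load hwc j).continuousWithinAt hs₀).tendsto.comp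
    (tendsto_nhdsWithin_iff.2 ⟨hlim, hs⟩)

theorem weight_le_weight (hw : ∀ i : Fin k, ∀ j ∈ R i, StrictMonoOn (w i j) (Set.Iic 1))
    {u : Fin k → Fin n → ℝ≥0} {i : Fin k} {j : Fin n} (hs : IsProfile n k R s) (hj : j ∈ R i)
    (h : u i j ≤ s i j) : w i j (u i j) ≤ w i j (s i j) :=
  (hw i j hj).monotoneOn (h.trans (hs.le_one i j)) (hs.le_one i j) h

theorem load_le_load (hw : ∀ i : Fin k, ∀ j ∈ R i, StrictMonoOn (w i j) (Set.Iic 1))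
    {u : Fin k → Fin n → ℝ≥0} {j : Fin n} (hs : IsProfile n k R s)
    (h : ∀ i, j ∈ R i → u i j ≤ s i j) : load n k R w u j ≤ load n k R w s j :=
  sum_le_sum fun i hi => weight_le_weight hw hs (mem_filter.1 hi).2 (h i (mem_filter.1 hi).2)

theorem load_lt_load (hw : ∀ i : Fin k, ∀ j ∈ R i, StrictMonoOn (w i j) (Set.Iic 1))
    {u : Fin k → Fin n → ℝ≥0} {i : Fin k} {j : Fin n} (hs : IsProfile n k R s)
    (h : ∀ i, j ∈ R i → u i j ≤ s i j) (hj : j ∈ R i) (hlt : u i j < s i j) :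
    load n k R w u j < load n k R w s j :=
  sum_lt_sum (fun i hi => weight_le_weight hw hs (mem_filter.1 hi).2 (h i (mem_filter.1 hi).2))
    ⟨i, mem_filter.2 ⟨mem_univ _, hj⟩, hw i j hj (hlt.le.trans (hs.le_one i j)) (hs.le_one i j) hlt⟩

theorem exists_transfer_cost_lt (hmono : ∀ j, StrictMono (f j)) (hcont : ∀ j, Continuous (f j))
    (hw : ∀ i : Fin k, ∀ j ∈ R i, StrictMonoOn (w i j) (Set.Iic 1))
    (hwc : ∀ i : Fin k, ∀ j ∈ R i, ContinuousOn (w i j) (Set.Iic 1))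
    (hs : IsProfile n k R s) {i : Fin k} {l j : Fin n} (hl : 0 < s i l) (hj : j ∈ R i)
    (hlt : cost n k f R w s j < cost n k f R w s l) :
    ∃ t, IsProfile n k R t ∧ cost n k f R w t l < cost n k f R w s l ∧
      cost n k f R w t j < cost n k f R w s l ∧
      ∀ x, x ≠ l → x ≠ j → cost n k f R w t x = cost n k f R w s x := by
  have hjl : j ≠ l := by rintro rfl; exact hlt.false
  have hlR : l ∈ R i := (isProfile_iff.1 hs i).mem_of_pos hl
  let t : ℝ≥0 → Fin k → Fin n → ℝ≥0 := fun θ =>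
    Function.update s i (Function.update (Function.update (s i) l (s i l - θ)) j (s i j + θ))
  have ht : ∀ θ ≤ s i l, IsProfile n k R (t θ) := fun θ hθ => isProfile_iff.2 fun i' => by
    rcases eq_or_ne i' i with rfl | hi'
    · simpa [t] using (isProfile_iff.1 hs i').update_sub_add hlR hj hjl hθ
    · simpa [t, hi'] using isProfile_iff.1 hs i'
  have hlim : Tendsto t (𝓝[>] 0) (𝓝 s) := by
    have hct : Continuous t := by fun_prop
    simpa [t] using (hct.tendsto 0).mono_left nhdsWithin_le_nhds
  have hsmall : ∀ᶠ θ in 𝓝[>] 0, θ ≤ s i l := nhdsWithin_le_nhds (eventually_le_nhds hl)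
  have hcost_j : ∀ᶠ θ in 𝓝[>] 0, cost n k f R w (t θ) j < cost n k f R w s l :=
    (((hcont j).tendsto _).comp (tendsto_load hwc (hsmall.mono ht) hs hlim j)).eventually_lt_const
      hlt
  obtain ⟨θ, hθj, hθ, hθpos⟩ := (hcost_j.and (hsmall.and self_mem_nhdsWithin)).exists
  have hoff : ∀ i' x, x ≠ l → x ≠ j → t θ i' x = s i' x := fun i' x hxl hxj => by
    rcases eq_or_ne i' i with rfl | hi' <;> simp [t, *]
  refine ⟨t θ, ht θ hθ, hmono l (load_lt_load hw hs (fun i' _ => ?_) hlR ?_), hθj,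
    fun x hxl hxj => by simp only [cost, load, hoff _ x hxl hxj]⟩
  · rcases eq_or_ne i' i with rfl | hi' <;> simp [t, hjl.symm, *]
  · simpa [t, hjl.symm] using tsub_lt_self hl hθpos

theorem exists_isNash_isLoadMinimal (hR : ∀ i, (R i).Nonempty)
    (hmono : ∀ j, StrictMono (f j)) (hcont : ∀ j, Continuous (f j))
    (hw : ∀ i : Fin k, ∀ j ∈ R i, StrictMonoOn (w i j) (Set.Iic 1))
    (hwc : ∀ i : Fin k, ∀ j ∈ R i, ContinuousOn (w i j) (Set.Iic 1)) :
    ∃ s, IsNash n k f R w s ∧ IsLoadMinimal R w s := by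
  have hG : ContinuousOn (fun s => sortDesc (cost n k f R w s)) {s | IsProfile n k R s} :=
    continuousOn_pi.2 fun r => (continuous_sortDesc r).comp_continuousOn
      (continuousOn_pi.2 fun j => (hcont j).comp_continuousOn (continuousOn_load hwc j))
  obtain ⟨_, ⟨s, hs, rfl⟩, hmin⟩ := IsCompact.exists_isMinOn_toLex
    (isCompact_setOf_isProfile.image_of_continuousOn hG) ((nonempty_setOf_isProfile hR).image _)
  refine ⟨s, ⟨hs, fun i l hl j hj => le_of_not_gt fun hlt => ?_⟩, fun u hu hlt => ?_⟩
  · obtain ⟨t, ht, htl, htj, hto⟩ := exists_transfer_cost_lt hmono hcont hw hwc hs hl hj hlt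
    refine (hmin ⟨t, ht, rfl⟩).not_gt (toLex_sortDesc_lt (l := l)
      (u := max (cost n k f R w t l) (max (cost n k f R w t j) (cost n k f R w s j)))
      (fun x hx => ?_) (le_max_left _ _) (max_lt htl (max_lt htj hlt)))
    have hxl : x ≠ l := by rintro rfl; exact hx.not_ge (le_max_left _ _)
    have hxj : x ≠ j := by rintro rfl; exact hx.not_ge ((le_max_left _ _).trans (le_max_right _ _))
    exact (hto x hxl hxj).le
  · refine (hmin ⟨u, hu, rfl⟩).not_gt (toLex_sortDesc_strictMono (Pi.lt_def.2 ?_))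
    obtain ⟨hle, j, hj⟩ := Pi.lt_def.1 hlt
    exact ⟨fun j => (hmono j).monotone (hle j), j, hmono j hj⟩

theorem IsNash.of_tendsto {β : Type*} {l : Filter β} [l.NeBot] {ε : β → ℝ}
    {s : β → Fin k → Fin n → ℝ≥0} (hcont : ∀ j, Continuous (f j))
    (hwc : ∀ i : Fin k, ∀ j ∈ R i, ContinuousOn (w i j) (Set.Iic 1))
    (hε : Tendsto ε l (𝓝 0)) (hs : ∀ b, IsNash n k (fun j x => f j x + ε b * x) R w (s b))
    (hlim : Tendsto s l (𝓝 s₀)) : IsNash n k f R w s₀ := by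
  have hs₀ : IsProfile n k R s₀ :=
    isClosed_setOf_isProfile.mem_of_tendsto hlim (Eventually.of_forall fun b => (hs b).1)
  have hcost : ∀ j, Tendsto (fun b => cost n k (fun j x => f j x + ε b * x) R w (s b) j) l
      (𝓝 (cost n k f R w s₀ j)) := fun j => by
    have hload := tendsto_load hwc (Eventually.of_forall fun b => (hs b).1) hs₀ hlim j
    simpa only [cost, Function.comp_apply, zero_mul, add_zero] using
      ((hcont j).tendsto _ |>.comp hload).add
        (hε.mul (NNReal.continuous_coe.tendsto _ |>.comp hload))
  refine ⟨hs₀, fun i m hm j hj => le_of_tendsto_of_tendsto (hcost m) (hcost j) ?_⟩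
  filter_upwards [(tendsto_pi_nhds.1 (tendsto_pi_nhds.1 hlim i) m).eventually_const_lt hm]
    with b hb using (hs b).2 i m hb j hj

theorem IsNash.load_lt_of_blocking (hmono : ∀ j, Monotone (f j))
    (hNash : IsNash n k f R w s₀) (hs' : IsProfile n k R s')
    (hblock : ∀ i m, s₀ i m < s' i m → ∀ l, 0 < s₀ i l →
      cost n k f R w s' m < cost n k f R w s₀ l)
    {i : Fin k} {m : Fin n} (h : s₀ i m < s' i m) :
    load n k R w s' m < load n k R w s₀ m := by
  obtain ⟨l, hl⟩ := (isProfile_iff.1 hNash.1 i).exists_pos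
  have hm : m ∈ R i := (isProfile_iff.1 hs' i).mem_of_pos (pos_of_gt h)
  exact (hmono m).reflect_lt ((hblock i m h l hl).trans_le (hNash.2 i l hl m hm))

theorem exists_tendsto_isProfile_le {β : Type*} {l : Filter β} {s : β → Fin k → Fin n → ℝ≥0}
    (hs' : IsProfile n k R s') (hs₀ : IsProfile n k R s₀) (hs : ∀ b, IsProfile n k R (s b))
    (hlim : Tendsto s l (𝓝 s₀)) :
    ∃ u : β → Fin k → Fin n → ℝ≥0, (∀ b, IsProfile n k R (u b)) ∧ Tendsto u l (𝓝 s') ∧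
      ∀ b i j, s' i j ≤ s₀ i j → u b i j ≤ s b i j := by
  simp only [isProfile_iff] at hs' hs₀ hs
  choose z hz hzlim hzle using fun i =>
    (hs' i).exists_tendsto_le (hs₀ i) (fun b => hs b i) (tendsto_pi_nhds.1 hlim i)
  exact ⟨fun b i => z i b, fun b => isProfile_iff.2 fun i => hz i b, tendsto_pi_nhds.2 hzlim,
    fun b i j => hzle i b j⟩

theorem IsNash.isStrong_of_tendsto {β : Type*} {l : Filter β} [l.NeBot]
    {s : β → Fin k → Fin n → ℝ≥0} (hmono : ∀ j, Monotone (f j))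
    (hw : ∀ i : Fin k, ∀ j ∈ R i, StrictMonoOn (w i j) (Set.Iic 1))
    (hwc : ∀ i : Fin k, ∀ j ∈ R i, ContinuousOn (w i j) (Set.Iic 1))
    (hNash : IsNash n k f R w s₀) (hs : ∀ b, IsProfile n k R (s b))
    (hmin : ∀ b, IsLoadMinimal R w (s b)) (hlim : Tendsto s l (𝓝 s₀)) :
    IsStrong n k f R w s₀ := by
  refine ⟨hNash, fun ⟨s', hs', hne, hblock⟩ => ?_⟩
  obtain ⟨i₀, hi₀⟩ := Function.ne_iff.1 hne
  obtain ⟨j₀, hj₀⟩ :=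
    (isProfile_iff.1 hs' i₀).exists_lt_of_ne (isProfile_iff.1 hNash.1 i₀) hi₀
  obtain ⟨u, hu, hulim, hule⟩ := exists_tendsto_isProfile_le hs' hNash.1 hs hlim
  have hraised : ∀ᶠ b in l, ∀ j, (∃ i, s₀ i j < s' i j) →
      load n k R w (u b) j < load n k R w (s b) j := by
    refine eventually_all.2 fun j => ?_
    by_cases h : ∃ i, s₀ i j < s' i j
    · obtain ⟨i, hi⟩ := h
      filter_upwards [(tendsto_load hwc (Eventually.of_forall hu) hs' hulim j).eventually_lt
        (tendsto_load hwc (Eventually.of_forall hs) hNash.1 hlim j)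
        (hNash.load_lt_of_blocking hmono hs' hblock hi)] with b hb using fun _ => hb
    · exact Eventually.of_forall fun _ h' => absurd h' h
  obtain ⟨b, hb⟩ := hraised.exists
  refine hmin b (u b) (hu b) (Pi.lt_def.2 ⟨fun j => ?_, j₀, hb j₀ ⟨i₀, hj₀⟩⟩)
  by_cases h : ∃ i, s₀ i j < s' i j
  · exact (hb j h).le
  · push Not at h
    exact load_le_load hw (hs b) fun i _ => hule b i j (h i)

end IDG

theorem exists_strong_nash_id_general (n k : ℕ)
    (f : Fin n → ℝ≥0 → ℝ) (R : Fin k → Finset (Fin n))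
    (w : Fin k → Fin n → ℝ≥0 → ℝ≥0)
    (hR : ∀ i, (R i).Nonempty)
    (hmono : ∀ j, Monotone (f j)) (hcont : ∀ j, Continuous (f j))
    (hw : ∀ i : Fin k, ∀ j ∈ R i, StrictMonoOn (w i j) (Set.Iic 1))
    (hwc : ∀ i : Fin k, ∀ j ∈ R i, ContinuousOn (w i j) (Set.Iic 1)) :
    ∃ s : Fin k → Fin n → ℝ≥0, IsStrong n k f R w s := by
  have hperturb : ∀ m : ℕ, ∀ j, StrictMono fun x : ℝ≥0 => f j x + 1 / ((m : ℝ) + 1) * x :=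
    fun m j => (hmono j).add_strictMono ((Subtype.strictMono_coe _).const_mul (by positivity))
  choose s hNash hmin using fun m : ℕ =>
    exists_isNash_isLoadMinimal hR (hperturb m) (fun j => by fun_prop) hw hwc
  obtain ⟨s₀, -, φ, hφ, hlim⟩ := isCompact_setOf_isProfile.tendsto_subseq fun m => (hNash m).1
  have hs₀ : IsNash n k f R w s₀ :=
    IsNash.of_tendsto hcont hwc (tendsto_one_div_add_atTop_nhds_zero_nat.comp hφ.tendsto_atTop)
      (fun m => hNash (φ m)) hlim
  exact ⟨s₀, hs₀.isStrong_of_tendsto hmono hw hwc (fun m => (hNash (φ m)).1)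
    (fun m => hmin (φ m)) hlim⟩

/-- In every resource selection game with I.D.-dependent
weighting whose cost functions are continuous (and nondecreasing) and whose
weighting functions are continuous (and strictly increasing) on `[0,1]`,
a strong Nash equilibrium exists. -/
theorem exists_strong_nash_id (n k : ℕ) (hn : 0 < n)
    (f : Fin n → ℝ≥0 → ℝ) (R : Fin k → Finset (Fin n))
    (w : Fin k → Fin n → ℝ≥0 → ℝ≥0)
    (hR : ∀ i, (R i).Nonempty)
    (hmono : ∀ j, Monotone (f j)) (hcont : ∀ j, Continuous (f j))
    (hw : ∀ i : Fin k, ∀ j ∈ R i, StrictMonoOn (w i j) (Set.Iic 1))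
    (hwc : ∀ i : Fin k, ∀ j ∈ R i, ContinuousOn (w i j) (Set.Iic 1)) :
    ∃ s : Fin k → Fin n → ℝ≥0, IsStrong n k f R w s :=
  exists_strong_nash_id_general n k f R w hR hmono hcont hw hwc
end

section
/- Let G be an n-resource/k-player-type resource selection game with I.D.-dependent weighting (with nondecreasing cost functions, not necessarily continuous). For every resource j ∈ {1,…,n} and every two strong Nash equilibria s and s' of G, the costs coincide: h_j^s = h_j^{s'}. -/
open scoped NNReal

open IDG

/-!
Let `s`, `s'` be strong equilibria. First, a type `i` that consumes differently in them cannot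
pay strictly less in `s'`: otherwise let all such gaining types move together from `s` to `s'`.
As `s` is strong, some resource `m` they move to is not cheaper than before, so its load grew
and some non-gaining type must have withdrawn from `m`; the Nash conditions of `s` and `s'` then
make `m` strictly cheaper than itself in `s'`.

Now if resource `j` were costlier in `s'`, its load would be higher, so some type `i` consumes
more of `j` in `s'`. Its equilibrium cost is then `cost s' j` in `s'`, and at most `cost s j` in
`s`, contradicting the first step with the roles of `s` and `s'` exchanged.
-/

namespace IDG

variable {n k : ℕ} {f : Fin n → ℝ≥0 → ℝ} {R : Fin k → Finset (Fin n)}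
  {w : Fin k → Fin n → ℝ≥0 → ℝ≥0} {s s' t : Fin k → Fin n → ℝ≥0}

namespace IsProfile

lemma mem_of_pos (hs : IsProfile n k R s) {i : Fin k} {j : Fin n} (h : 0 < s i j) :
    j ∈ R i := by
  by_contra hj
  exact h.ne' (hs.1 i j hj)

lemma le_one_s7 (hs : IsProfile n k R s) (i : Fin k) (j : Fin n) : s i j ≤ 1 := by
  by_cases hj : j ∈ R i
  · exact hs.2 i ▸ Finset.single_le_sum (fun _ _ => zero_le) hj
  · exact (hs.1 i j hj).trans_le zero_le

lemma exists_pos (hs : IsProfile n k R s) (i : Fin k) : ∃ l, 0 < s i l := by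
  obtain ⟨l, -, hl⟩ := Finset.exists_ne_zero_of_sum_ne_zero (hs.2 i ▸ one_ne_zero)
  exact ⟨l, pos_of_ne_zero hl⟩

lemma ite (hs : IsProfile n k R s) (hs' : IsProfile n k R s') (p : Fin k → Prop)
    [DecidablePred p] : IsProfile n k R fun i => if p i then s' i else s i := by
  refine ⟨fun i j hj => ?_, fun i => ?_⟩ <;> dsimp only <;> split_ifs
  exacts [hs'.1 i j hj, hs.1 i j hj, hs'.2 i, hs.2 i]

end IsProfile

lemma IsNash.cost_eq_of_pos (hs : IsNash n k f R w s) {i : Fin k} {l l' : Fin n}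
    (hl : 0 < s i l) (hl' : 0 < s i l') : cost n k f R w s l = cost n k f R w s l' :=
  (hs.2 i l hl l' (hs.1.mem_of_pos hl')).antisymm (hs.2 i l' hl' l (hs.1.mem_of_pos hl))

lemma IsStrong.exists_cost_le_of_ne (hs : IsStrong n k f R w s) (ht : IsProfile n k R t)
    (hne : t ≠ s) : ∃ i m, s i m < t i m ∧ ∃ l, 0 < s i l ∧
      cost n k f R w s l ≤ cost n k f R w t m := by
  by_contra! h
  exact hs.2 ⟨t, ht, hne, h⟩

lemma exists_lt_of_cost_lt {j : Fin n} (hf : Monotone (f j))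
    (hw : ∀ i, j ∈ R i → MonotoneOn (w i j) (Set.Iic 1))
    (hs : IsProfile n k R s) (ht : IsProfile n k R t)
    (h : cost n k f R w s j < cost n k f R w t j) : ∃ i, j ∈ R i ∧ s i j < t i j := by
  obtain ⟨i, hi, hlt⟩ := Finset.exists_lt_of_sum_lt (hf.reflect_lt h)
  have hjR : j ∈ R i := (Finset.mem_filter.1 hi).2
  exact ⟨i, hjR, (hw i hjR).reflect_lt (hs.le_one_s7 i j) (ht.le_one_s7 i j) hlt⟩

lemma IsStrong.cost_le_of_ne (hf : ∀ j, Monotone (f j))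
    (hw : ∀ i, ∀ j ∈ R i, MonotoneOn (w i j) (Set.Iic 1))
    (hs : IsStrong n k f R w s) (hs' : IsStrong n k f R w s')
    {i : Fin k} (hne : s i ≠ s' i) {l l' : Fin n} (hl : 0 < s i l) (hl' : 0 < s' i l') :
    cost n k f R w s l ≤ cost n k f R w s' l' := by
  classical
  set Gains : Fin k → Prop := fun i => s i ≠ s' i ∧
    ∃ a a', 0 < s i a ∧ 0 < s' i a' ∧ cost n k f R w s' a' < cost n k f R w s a
  suffices ∀ i, ¬ Gains i by
    by_contra! h
    exact this i ⟨hne, l, l', hl, hl', h⟩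
  intro i₀ hi₀
  set t := fun i => if Gains i then s' i else s i
  have ht : IsProfile n k R t := hs.1.1.ite hs'.1.1 Gains
  have htne : t ≠ s := fun h => hi₀.1 (by simpa [t, hi₀] using (congrFun h i₀).symm)
  obtain ⟨i₂, m, hm, l₂, hl₂, hcost⟩ := hs.exists_cost_le_of_ne ht htne
  have hi₂ : Gains i₂ := by
    by_contra h
    simp [t, h] at hm
  rw [show t i₂ = s' i₂ from if_pos hi₂] at hm
  obtain ⟨-, a, a', ha, ha', hlt⟩ := hi₂
  have hm' : 0 < s' i₂ m := pos_of_gt hm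
  have hcost_lt : cost n k f R w s' m < cost n k f R w t m :=
    calc cost n k f R w s' m = cost n k f R w s' a' := hs'.1.cost_eq_of_pos hm' ha'
      _ < cost n k f R w s a := hlt
      _ = cost n k f R w s l₂ := hs.1.cost_eq_of_pos ha hl₂
      _ ≤ cost n k f R w t m := hcost
  obtain ⟨i₁, hmR, h₁⟩ := exists_lt_of_cost_lt (hf m) (fun i hi => hw i m hi) hs'.1.1 ht hcost_lt
  have hi₁ : ¬ Gains i₁ := fun h => by simp [t, h] at h₁
  rw [show t i₁ = s i₁ from if_neg hi₁] at h₁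
  obtain ⟨b', hb'⟩ := hs'.1.1.exists_pos i₁
  have hcost_le : cost n k f R w s m ≤ cost n k f R w s' b' := by
    by_contra! h
    exact hi₁ ⟨fun e => h₁.ne' (congrFun e m), m, b', pos_of_gt h₁, hb', h⟩
  have := calc cost n k f R w s' m = cost n k f R w s' a' := hs'.1.cost_eq_of_pos hm' ha'
    _ < cost n k f R w s a := hlt
    _ ≤ cost n k f R w s m := hs.1.2 i₂ a ha m (hs'.1.1.mem_of_pos hm')
    _ ≤ cost n k f R w s' b' := hcost_le
    _ ≤ cost n k f R w s' m := hs'.1.2 i₁ b' hb' m hmR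
  exact this.false

lemma IsStrong.cost_le (hf : ∀ j, Monotone (f j))
    (hw : ∀ i, ∀ j ∈ R i, MonotoneOn (w i j) (Set.Iic 1))
    (hs : IsStrong n k f R w s) (hs' : IsStrong n k f R w s') (j : Fin n) :
    cost n k f R w s' j ≤ cost n k f R w s j := by
  by_contra! h
  obtain ⟨i, hjR, hlt⟩ := exists_lt_of_cost_lt (hf j) (fun i hi => hw i j hi) hs.1.1 hs'.1.1 h
  obtain ⟨l, hl⟩ := hs.1.1.exists_pos i
  have hne : s' i ≠ s i := fun e => hlt.ne' (congrFun e j)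
  have := calc cost n k f R w s' j ≤ cost n k f R w s l :=
        hs'.cost_le_of_ne hf hw hs hne (pos_of_gt hlt) hl
    _ ≤ cost n k f R w s j := hs.1.2 i l hl j hjR
  exact this.not_gt h

end IDG

theorem strong_cost_unique_id_general (n k : ℕ)
    (f : Fin n → ℝ≥0 → ℝ) (R : Fin k → Finset (Fin n))
    (w : Fin k → Fin n → ℝ≥0 → ℝ≥0)
    (hmono : ∀ j, Monotone (f j))
    (hw : ∀ i : Fin k, ∀ j ∈ R i, StrictMonoOn (w i j) (Set.Iic 1))
    (s s' : Fin k → Fin n → ℝ≥0)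
    (hs : IsStrong n k f R w s) (hs' : IsStrong n k f R w s') (j : Fin n) :
    cost n k f R w s j = cost n k f R w s' j := by
  have hw' : ∀ i, ∀ j ∈ R i, MonotoneOn (w i j) (Set.Iic 1) := fun i j hj => (hw i j hj).monotoneOn
  exact (hs'.cost_le hmono hw' hs j).antisymm (hs.cost_le hmono hw' hs' j)

/-- In every resource selection game with I.D.-dependent
weighting (nondecreasing, not necessarily continuous, cost functions; strictly
increasing weighting functions on `[0,1]`), the cost of each resource is the
same in all strong Nash equilibria. -/
theorem strong_cost_unique_id (n k : ℕ)
    (f : Fin n → ℝ≥0 → ℝ) (R : Fin k → Finset (Fin n))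
    (w : Fin k → Fin n → ℝ≥0 → ℝ≥0)
    (hR : ∀ i, (R i).Nonempty)
    (hmono : ∀ j, Monotone (f j))
    (hw : ∀ i : Fin k, ∀ j ∈ R i, StrictMonoOn (w i j) (Set.Iic 1))
    (s s' : Fin k → Fin n → ℝ≥0)
    (hs : IsStrong n k f R w s) (hs' : IsStrong n k f R w s') (j : Fin n) :
    cost n k f R w s j = cost n k f R w s' j :=
  strong_cost_unique_id_general n k f R w hmono hw s s' hs hs' j
end

section
/- Let n ∈ ℕ and for each i ∈ {1,…,n} let R^i ⊆ {1,…,n} be the set of men acceptable to woman i; for I ⊆ {1,…,n} let R^I = ∪_{i∈I} R^i. A perfect fractional marriage exists if and only if |I| ≤ |R^I| for every I ⊆ {1,…,n}. -/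
open scoped NNReal

/-- Fractional version of Hall's marriage theorem: a perfect
fractional marriage exists iff `|I| ≤ |R^I|` for every set of women `I`,
where `R^I = ⋃_{i ∈ I} R^i`. -/
theorem hall_fractional (n : ℕ) (R : Fin n → Finset (Fin n)) :
    (∃ s : Fin n → Fin n → ℝ≥0,
      (∀ i : Fin n, ∀ j : Fin n, j ∉ R i → s i j = 0) ∧
      (∀ i : Fin n, ∑ j ∈ R i, s i j = 1) ∧
      (∀ j : Fin n, ∑ i : Fin n, s i j = 1)) ↔
    ∀ I : Finset (Fin n), I.card ≤ (I.biUnion R).card := by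
  constructor
  · rintro ⟨s, hz, hrow, hcol⟩ I
    have key : (I.card : ℝ≥0) ≤ ((I.biUnion R).card : ℝ≥0) := by
      calc (I.card : ℝ≥0) = ∑ _i ∈ I, (1 : ℝ≥0) := by simp
        _ = ∑ i ∈ I, ∑ j ∈ R i, s i j :=
            Finset.sum_congr rfl fun i _ => (hrow i).symm
        _ = ∑ i ∈ I, ∑ j ∈ I.biUnion R, s i j := by
            refine Finset.sum_congr rfl fun i hi => ?_
            refine Finset.sum_subset (fun j hj => Finset.mem_biUnion.2 ⟨i, hi, hj⟩) ?_
            exact fun j _ hj => hz i j hj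
        _ = ∑ j ∈ I.biUnion R, ∑ i ∈ I, s i j := Finset.sum_comm
        _ ≤ ∑ j ∈ I.biUnion R, ∑ i : Fin n, s i j :=
            Finset.sum_le_sum fun j _ =>
              Finset.sum_le_sum_of_subset (Finset.subset_univ I)
        _ = ∑ _j ∈ I.biUnion R, (1 : ℝ≥0) :=
            Finset.sum_congr rfl fun j _ => hcol j
        _ = _ := by simp
    exact_mod_cast key
  · intro h
    obtain ⟨f, hf, hmem⟩ := (Finset.all_card_le_biUnion_card_iff_existsInjective' R).1 h
    have hsurj : Function.Surjective f := Finite.surjective_of_injective hf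
    refine ⟨fun i j => if f i = j then 1 else 0, ?_, ?_, ?_⟩
    · intro i j hj
      simp only [ite_eq_right_iff, one_ne_zero, imp_false]
      intro he; exact hj (he ▸ hmem i)
    · intro i
      rw [Finset.sum_ite_eq (R i) (f i) (fun _ => (1 : ℝ≥0))]
      simp [hmem i]
    · intro j
      obtain ⟨i0, rfl⟩ := hsurj j
      simp only [hf.eq_iff]
      rw [Finset.sum_ite_eq' Finset.univ i0 (fun _ => (1 : ℝ≥0))]
      simp
end

section
/- Let m ∈ ℕ, let f_1, …, f_m : ℝ≥0 → ℝ be nondecreasing functions, let B_1, …, B_r be a partition of {1,…,m} into nonempty blocks, let μ ≥ 0 and h ∈ ℝ. Then μ admits an equalizing distribution for f_1,…,f_m with common value h if and only if there exist nonnegative reals ν_1, …, ν_r with Σ_{i=1}^r ν_i = μ such that for each i ∈ {1,…,r}, ν_i admits an equalizing distribution for the functions (f_j)_{j∈B_i} with common value h. Consequently, Eq⟨f_1,…,f_m⟩ coincides with the equalization of the block equalizations Eq⟨(f_j)_{j∈B_1}⟩, …, Eq⟨(f_j)_{j∈B_r}⟩. -/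
open scoped NNReal

/-- `EqDistOn m f S t h`: the total mass `t` admits an equalizing distribution
among the functions `(f j)_{j ∈ S}` with common value `h`; i.e., there are
nonnegative reals `(ν j)_{j ∈ S}` summing to `t` with `f j (ν j) = h` for all
`j ∈ S`. When this holds, the equalization `Eq⟨f_j : j ∈ S⟩(t)` is defined and
equals `h`. -/
def EqDistOn (m : ℕ) (f : Fin m → ℝ≥0 → ℝ) (S : Finset (Fin m)) (t : ℝ≥0) (h : ℝ) : Prop :=
  ∃ ν : Fin m → ℝ≥0, ∑ j ∈ S, ν j = t ∧ ∀ j ∈ S, f j (ν j) = h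

/-- Composition of equalizations: given a partition of
`{1,…,m}` into nonempty blocks `B_1, …, B_r`, a total mass `μ` admits an
equalizing distribution for `f_1, …, f_m` with common value `h` iff `μ` can be
split into nonnegative masses `ν_1, …, ν_r` such that each `ν_i` admits an
equalizing distribution for `(f_j)_{j ∈ B_i}` with common value `h`; i.e.,
`Eq⟨f_1,…,f_m⟩` is the equalization of the block equalizations. -/
theorem equalization_compose (m r : ℕ) (f : Fin m → ℝ≥0 → ℝ)
    (hmono : ∀ j, Monotone (f j))
    (B : Fin r → Finset (Fin m))
    (hBne : ∀ i, (B i).Nonempty)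
    (hBdisj : ∀ i₁ i₂ : Fin r, i₁ ≠ i₂ → Disjoint (B i₁) (B i₂))
    (hBcover : Finset.univ.biUnion B = (Finset.univ : Finset (Fin m)))
    (μ : ℝ≥0) (h : ℝ) :
    EqDistOn m f Finset.univ μ h ↔
      ∃ ν : Fin r → ℝ≥0, ∑ i, ν i = μ ∧ ∀ i : Fin r, EqDistOn m f (B i) (ν i) h := by
  have hsum : ∀ g : Fin m → ℝ≥0, ∑ i, ∑ j ∈ B i, g j = ∑ j, g j := by
    intro g
    rw [← Finset.sum_biUnion (fun i _ i' _ hne => hBdisj i i' hne), hBcover]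
  constructor
  · rintro ⟨ν, hνsum, hνeq⟩
    refine ⟨fun i => ∑ j ∈ B i, ν j, by rw [hsum, hνsum], fun i => ⟨ν, rfl, fun j _ => hνeq j (Finset.mem_univ j)⟩⟩
  · rintro ⟨ν, hνsum, hν⟩
    choose w hwsum hweq using hν
    have hidx : ∀ j : Fin m, ∃ i, j ∈ B i := by
      intro j
      have := hBcover ▸ Finset.mem_univ j
      simpa [Finset.mem_biUnion] using (hBcover.symm ▸ Finset.mem_univ j : j ∈ Finset.univ.biUnion B)
    choose idx hidxmem using hidx
    refine ⟨fun j => w (idx j) j, ?_, fun j _ => hweq (idx j) j (hidxmem j)⟩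
    rw [← hsum]
    rw [← hνsum]
    refine Finset.sum_congr rfl fun i _ => ?_
    rw [← hwsum i]
    refine Finset.sum_congr rfl fun j hj => ?_
    have : idx j = i := by
      by_contra hne
      exact absurd ((hBdisj _ _ hne).le_bot (Finset.mem_inter.mpr ⟨hidxmem j, hj⟩)) (Finset.notMem_empty j)
    rw [this]
end

section
/- Let m ∈ ℕ and let f_1, …, f_m : ℝ≥0 → ℝ be nondecreasing continuous functions with f_1(0) = f_2(0) = ⋯ = f_m(0). Then for every μ ≥ 0 an equalizing distribution of μ for f_1,…,f_m exists, and the resulting equalization Eq⟨f_1,…,f_m⟩ : ℝ≥0 → ℝ is a continuous nondecreasing function. Moreover, if at least one of f_1,…,f_m is Lipschitz with constant K, then Eq⟨f_1,…,f_m⟩ is Lipschitz with constant K. -/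
/-!
Everything rests on a pigeonhole principle: if `ν` equalizes `t` at level `h` and `w` distributes
at least (at most) `t`, then some coordinate satisfies `ν j ≤ w j` (`w j ≤ ν j`), so
`h ≤ f j (w j)` (`f j (w j) ≤ h`). Comparing the level at `t'` with the distributions obtained from
`ν` by adding `t' - t` to one coordinate, or subtracting `t - t'` from all of them, squeezes it
between continuous functions of `t'` equal to `h` at `t' = t`; this gives monotonicity, continuity
and, when the modified coordinate carries a `K`-Lipschitz function, the Lipschitz bound.
Existence follows by adding the functions one at a time: the equalization `E` of the previous ones
is continuous, so the intermediate value theorem yields `x ≤ t` with `E x = f a (t - x)`.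
-/

open scoped NNReal

open Filter Topology

theorem Finset.sum_tsub_const_le {ι M : Type*} [AddCommMonoid M] [LinearOrder M]
    [CanonicallyOrderedAdd M] [Sub M] [OrderedSub M] [AddLeftReflectLE M]
    (S : Finset ι) (ν : ι → M) (d : M) : ∑ j ∈ S, (ν j - d) ≤ (∑ j ∈ S, ν j) - d := by
  classical
  by_cases hd : ∃ j ∈ S, d ≤ ν j
  · obtain ⟨j, hj, hdj⟩ := hd
    rw [← Finset.add_sum_erase S (fun i => ν i - d) hj, ← Finset.add_sum_erase S ν hj,
      ← tsub_add_eq_add_tsub hdj]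
    gcongr with i
    exact tsub_le_self
  · push Not at hd
    rw [Finset.sum_eq_zero fun j hj => tsub_eq_zero_of_le (hd j hj).le]
    exact zero_le

theorem exists_eq_apply_tsub {g k : ℝ≥0 → ℝ} (hg : Continuous g) (hk : Continuous k)
    (hgm : Monotone g) (hkm : Monotone k) (h0 : g 0 = k 0) (t : ℝ≥0) :
    ∃ x ≤ t, g x = k (t - x) := by
  have hφ : Continuous fun x => g x - k (t - x) := by fun_prop
  obtain ⟨x, hx, hφx⟩ := intermediate_value_Icc (zero_le : 0 ≤ t) hφ.continuousOn
    (show (0 : ℝ) ∈ Set.Icc _ _ from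
      ⟨by simpa [h0] using hkm (zero_le : 0 ≤ t), by simpa [← h0] using hgm (zero_le : 0 ≤ t)⟩)
  exact ⟨x, hx.2, sub_eq_zero.1 hφx⟩

section

variable {m : ℕ} {f : Fin m → ℝ≥0 → ℝ} {S : Finset (Fin m)} {t : ℝ≥0} {h : ℝ}

namespace EqDistOn

theorem exists_le_apply (hf : ∀ j, Monotone (f j)) (hS : S.Nonempty) (hE : EqDistOn m f S t h)
    {w : Fin m → ℝ≥0} (hw : t ≤ ∑ j ∈ S, w j) : ∃ j ∈ S, h ≤ f j (w j) := by
  obtain ⟨ν, hν, hνh⟩ := hE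
  obtain ⟨j, hj, hνw⟩ := Finset.exists_le_of_sum_le hS (hν ▸ hw)
  exact ⟨j, hj, hνh j hj ▸ hf j hνw⟩

theorem exists_apply_le (hf : ∀ j, Monotone (f j)) (hS : S.Nonempty) (hE : EqDistOn m f S t h)
    {w : Fin m → ℝ≥0} (hw : ∑ j ∈ S, w j ≤ t) : ∃ j ∈ S, f j (w j) ≤ h := by
  obtain ⟨ν, hν, hνh⟩ := hE
  obtain ⟨j, hj, hwν⟩ := Finset.exists_le_of_sum_le hS (hν ▸ hw)
  exact ⟨j, hj, hνh j hj ▸ hf j hwν⟩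

theorem le_of_le (hf : ∀ j, Monotone (f j)) (hS : S.Nonempty) (hE : EqDistOn m f S t h)
    {t' : ℝ≥0} {h' : ℝ} (hE' : EqDistOn m f S t' h') (htt' : t ≤ t') : h ≤ h' := by
  obtain ⟨ν', hν', hν'h⟩ := hE'
  obtain ⟨j, hj, hle⟩ := hE.exists_le_apply hf hS (hν' ▸ htt')
  exact hν'h j hj ▸ hle

theorem apply_zero (hE : EqDistOn m f S 0 h) {j : Fin m} (hj : j ∈ S) : f j 0 = h := by
  obtain ⟨ν, hν, hνh⟩ := hE
  rw [← (Finset.sum_eq_zero_iff.1 hν) j hj, hνh j hj]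

theorem cons (hE : EqDistOn m f S t h) {a : Fin m} (ha : a ∉ S) {s : ℝ≥0} (hfa : f a s = h) :
    EqDistOn m f (S.cons a ha) (s + t) h := by
  obtain ⟨ν, hν, hνh⟩ := hE
  refine ⟨Function.update ν a s, ?_, ?_⟩
  · rw [Finset.sum_cons, Function.update_self, ← hν]
    congr 1
    exact Finset.sum_congr rfl fun j hj =>
      Function.update_of_ne (ne_of_mem_of_not_mem hj ha) _ _
  · intro j hj
    rcases Finset.mem_cons.1 hj with rfl | hj
    · rwa [Function.update_self]
    · rw [Function.update_of_ne (ne_of_mem_of_not_mem hj ha), hνh j hj]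

end EqDistOn

theorem le_max_apply_add_of_eqDistOn (hf : ∀ j, Monotone (f j)) (hS : S.Nonempty)
    {ν : Fin m → ℝ≥0} (hν : ∑ j ∈ S, ν j = t) (hνh : ∀ j ∈ S, f j (ν j) = h)
    {t' : ℝ≥0} {h' : ℝ} (hE' : EqDistOn m f S t' h') {j : Fin m} (hj : j ∈ S) :
    h' ≤ max h (f j (ν j + (t' - t))) := by
  have hw : t' ≤ ∑ i ∈ S, (ν i + (Pi.single j (t' - t) : Fin m → ℝ≥0) i) := by
    rw [Finset.sum_add_distrib, Finset.sum_pi_single', if_pos hj, hν]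
    exact le_add_tsub
  obtain ⟨i, hi, hle⟩ := hE'.exists_le_apply hf hS hw
  rcases eq_or_ne i j with rfl | hij
  · exact le_max_of_le_right (by simpa using hle)
  · exact le_max_of_le_left (by simpa [Pi.single_eq_of_ne hij, hνh i hi] using hle)

variable {E : ℝ≥0 → ℝ}

theorem monotone_of_forall_eqDistOn (hf : ∀ j, Monotone (f j)) (hS : S.Nonempty)
    (hE : ∀ t, EqDistOn m f S t (E t)) : Monotone E :=
  fun _ _ hab => (hE _).le_of_le hf hS (hE _) hab

theorem lipschitzWith_of_forall_eqDistOn (hf : ∀ j, Monotone (f j)) (hS : S.Nonempty)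
    (hE : ∀ t, EqDistOn m f S t (E t)) {j : Fin m} (hj : j ∈ S) {K : ℝ≥0}
    (hK : LipschitzWith K (f j)) : LipschitzWith K E := by
  refine LipschitzWith.of_le_add_mul K fun x y => ?_
  obtain ⟨ν, hν, hνE⟩ := hE y
  have hjump : f j (ν j + (x - y)) ≤ E y + K * dist x y := by
    calc f j (ν j + (x - y)) ≤ f j (ν j) + K * dist (ν j + (x - y)) (ν j) := hK.le_add_mul _ _
      _ ≤ E y + K * dist x y := by
        rw [hνE j hj]
        gcongr
        rw [dist_nndist, dist_nndist, NNReal.coe_le_coe, NNReal.nndist_eq, NNReal.nndist_eq,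
          add_tsub_cancel_left, tsub_eq_zero_of_le le_self_add]
        exact max_le_max le_rfl zero_le
  calc E x ≤ max (E y) (f j (ν j + (x - y))) :=
        le_max_apply_add_of_eqDistOn hf hS hν hνE (hE x) hj
    _ ≤ E y + K * dist x y := max_le (le_add_of_nonneg_right (by positivity)) hjump

theorem continuous_of_forall_eqDistOn (hf : ∀ j, Monotone (f j)) (hfc : ∀ j, Continuous (f j))
    (hS : S.Nonempty) (hE : ∀ t, EqDistOn m f S t (E t)) : Continuous E := by
  refine continuous_iff_continuousAt.2 fun μ => ?_
  obtain ⟨ν, hν, hνE⟩ := hE μ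
  obtain ⟨j₀, hj₀⟩ := hS
  have hlower :
      Tendsto (fun t => S.inf' ⟨j₀, hj₀⟩ fun j => f j (ν j - (μ - t))) (𝓝 μ) (𝓝 (E μ)) := by
    have hj : ∀ j ∈ S, Tendsto (fun t => f j (ν j - (μ - t))) (𝓝 μ) (𝓝 (E μ)) := fun j hj => by
      have hfj := hfc j
      have hc : Continuous fun t => f j (ν j - (μ - t)) := by fun_prop
      simpa [hνE j hj] using hc.tendsto μ
    have hconst : S.inf' ⟨j₀, hj₀⟩ (fun _ => E μ) = E μ :=
      le_antisymm (Finset.inf'_le _ hj₀) (Finset.le_inf' _ _ fun _ _ => le_rfl)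
    simpa only [hconst] using Tendsto.finset_inf'_nhds_apply ⟨j₀, hj₀⟩ hj
  have hupper : Tendsto (fun t => max (E μ) (f j₀ (ν j₀ + (t - μ)))) (𝓝 μ) (𝓝 (E μ)) := by
    have hfj₀ := hfc j₀
    have hc : Continuous fun t => f j₀ (ν j₀ + (t - μ)) := by fun_prop
    simpa [hνE j₀ hj₀] using (tendsto_const_nhds (x := E μ)).max (hc.tendsto μ)
  refine tendsto_of_tendsto_of_tendsto_of_le_of_le hlower hupper (fun t => ?_) fun t =>
    le_max_apply_add_of_eqDistOn hf ⟨j₀, hj₀⟩ hν hνE (hE t) hj₀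
  obtain ⟨j, hj, hle⟩ := (hE t).exists_apply_le hf ⟨j₀, hj₀⟩ (w := fun j => ν j - (μ - t))
    ((Finset.sum_tsub_const_le S ν _).trans (hν ▸ tsub_tsub_le))
  exact Finset.inf'_le_of_le _ hj hle

theorem exists_eqDistOn (hf : ∀ j, Monotone (f j)) (hfc : ∀ j, Continuous (f j))
    (h0 : ∀ i j, f i 0 = f j 0) (hS : S.Nonempty) (t : ℝ≥0) : ∃ h, EqDistOn m f S t h := by
  induction hS using Finset.Nonempty.cons_induction generalizing t with
  | singleton a => exact ⟨f a t, fun _ => t, by simp, by simp⟩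
  | cons a S ha hS ih =>
    choose E hE using ih
    obtain ⟨j, hj⟩ := hS
    obtain ⟨x, hxt, hEx⟩ := exists_eq_apply_tsub
      (continuous_of_forall_eqDistOn hf hfc ⟨j, hj⟩ hE) (hfc a)
      (monotone_of_forall_eqDistOn hf ⟨j, hj⟩ hE) (hf a)
      (((hE 0).apply_zero hj).symm.trans (h0 j a)) t
    exact ⟨E x, tsub_add_cancel_of_le hxt ▸ (hE x).cons ha hEx.symm⟩

end

/-- For continuous nondecreasing `f_1, …, f_m` with
`f_1(0) = ⋯ = f_m(0)`, every total mass admits an equalizing distribution, and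
the resulting equalization `E` is a continuous nondecreasing function; moreover,
if some `f_j` is `K`-Lipschitz then `E` is `K`-Lipschitz. -/
theorem equalization_continuous (m : ℕ) (hm : 0 < m)
    (f : Fin m → ℝ≥0 → ℝ) (hmono : ∀ j, Monotone (f j))
    (hcont : ∀ j, Continuous (f j))
    (h0 : ∀ i j : Fin m, f i 0 = f j 0) :
    ∃ E : ℝ≥0 → ℝ,
      (∀ μ : ℝ≥0, EqDistOn m f Finset.univ μ (E μ)) ∧
      Continuous E ∧ Monotone E ∧
      (∀ K : ℝ≥0, (∃ j, LipschitzWith K (f j)) → LipschitzWith K E) := by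
  have huniv : (Finset.univ : Finset (Fin m)).Nonempty := ⟨⟨0, hm⟩, Finset.mem_univ _⟩
  choose E hE using exists_eqDistOn hmono hcont h0 huniv
  exact ⟨E, hE, continuous_of_forall_eqDistOn hmono hcont huniv hE,
    monotone_of_forall_eqDistOn hmono huniv hE,
    fun K ⟨j, hj⟩ => lipschitzWith_of_forall_eqDistOn hmono huniv hE (Finset.mem_univ j) hj⟩
end

section
/- Every normal distribution constraint is satisfiable: if C = ((μ^R)_{∅≠R⊆[n]}, ([t_j,T_j])_{j=1}^n) is a distribution constraint such that for every nonempty S ⊆ {1,…,n} both t_C(S) ≤ M_C(S) and m_C(S) ≤ T_C(S), then there exist nonnegative reals (μ_j^R)_{j∈[n], ∅≠R⊆[n]} with μ_j^R = 0 for j ∉ R and Σ_{j∈R} μ_j^R = μ^R for every nonempty R, and with t_j ≤ Σ_{∅≠R⊆[n]} μ_j^R ≤ T_j for every j ∈ {1,…,n}. -/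
open scoped NNReal

/-!
Minimise `∑ j, d j ^ 2` over the compact set of distributions, where `d j` is the signed distance
of the load on `j` from `[t j, T j]`. As `d ^ 2` is convex with `2`-Lipschitz derivative `2 d`,
at a minimiser no load can move from `y` to `x` (some type containing `x` has mass on `y`) when
`d x < d y`; hence `d` does not decrease along chains of such moves. If `j₀` were underloaded,
every resource that can pass load to `j₀` is underloaded, and the set `A` of them absorbs all
mass of every type meeting it, so `M(A) ≤ load(A) < t(A)`. Dually, if `j₀` were overloaded, the
set `B` of resources reachable from `j₀` is overloaded and only receives mass of types inside
`B`, so `T(B) < load(B) ≤ m(B)`.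
-/

open Finset Relation

namespace DistributionConstraint

section SignedDist

def signedDist (t T L : ℝ) : ℝ := L - max t (min L T)

variable {t T L : ℝ}

theorem signedDist_neg_iff : signedDist t T L < 0 ↔ L < t := by
  simp [signedDist]

theorem signedDist_pos_iff (htT : t ≤ T) : 0 < signedDist t T L ↔ T < L := by
  simp only [signedDist, sub_pos, max_lt_iff, min_lt_iff, lt_self_iff_false, false_or]
  exact ⟨And.right, fun h => ⟨htT.trans_lt h, h⟩⟩

theorem signedDist_add_sq_le (htT : t ≤ T) (L d : ℝ) :
    signedDist t T (L + d) ^ 2 ≤ (signedDist t T L + d) ^ 2 := by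
  unfold signedDist
  simp only [max_def, min_def]
  split_ifs <;> nlinarith

@[fun_prop]
theorem continuous_signedDist (t T : ℝ) : Continuous (signedDist t T) := by
  unfold signedDist
  fun_prop

end SignedDist

variable {ι : Type*}

structure IsDistribution (μ : Finset ι → ℝ≥0) (q : Finset ι → ι → ℝ≥0) : Prop where
  eq_zero_of_notMem : ∀ R j, j ∉ R → q R j = 0
  sum_eq : ∀ R : Finset ι, R.Nonempty → ∑ j ∈ R, q R j = μ R

/-- Some of the load on `y` may be moved to `x`. -/
def Transferable (q : Finset ι → ι → ℝ≥0) (y x : ι) : Prop := ∃ R, x ∈ R ∧ 0 < q R y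

section IsDistribution

variable {μ : Finset ι → ℝ≥0} {q : Finset ι → ι → ℝ≥0}

theorem IsDistribution.le (hq : IsDistribution μ q) (R : Finset ι) (j : ι) : q R j ≤ μ R := by
  by_cases hj : j ∈ R
  · rw [← hq.sum_eq R ⟨j, hj⟩]
    exact single_le_sum (fun _ _ => zero_le) hj
  · simp [hq.eq_zero_of_notMem R j hj]

theorem exists_isDistribution (μ : Finset ι → ℝ≥0) : ∃ q, IsDistribution μ q := by
  classical
  refine ⟨fun R => if h : R.Nonempty then Pi.single h.choose (μ R) else 0, ?_, ?_⟩
  · intro R j hj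
    split_ifs with h
    · exact Pi.single_eq_of_ne (by rintro rfl; exact hj h.choose_spec) _
    · rfl
  · intro R hR
    simp [hR, sum_pi_single', hR.choose_spec]

theorem isCompact_setOf_isDistribution (μ : Finset ι → ℝ≥0) :
    IsCompact {q | IsDistribution μ q} := by
  have hclosed : IsClosed {q : Finset ι → ι → ℝ≥0 | IsDistribution μ q} := by
    have : {q : Finset ι → ι → ℝ≥0 | IsDistribution μ q} =
        {q | ∀ R j, j ∉ R → q R j = 0} ∩ {q | ∀ R : Finset ι, R.Nonempty → ∑ j ∈ R, q R j = μ R} :=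
      Set.ext fun q => ⟨fun h => ⟨h.1, h.2⟩, fun h => ⟨h.1, h.2⟩⟩
    simp only [this, Set.ofPred_forall]
    exact (isClosed_iInter fun R => isClosed_iInter fun j => isClosed_iInter fun _ =>
      isClosed_eq (by fun_prop) continuous_const).inter
      (isClosed_iInter fun R => isClosed_iInter fun _ => isClosed_eq (by fun_prop) continuous_const)
  refine (isCompact_univ_pi fun R => isCompact_univ_pi fun _ =>
    isCompact_Icc (a := 0) (b := μ R)).of_isClosed_subset hclosed ?_
  exact fun q hq R _ j _ => ⟨zero_le, hq.le R j⟩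

theorem IsDistribution.mem_of_pos (hq : IsDistribution μ q) {R : Finset ι} {j : ι}
    (hj : 0 < q R j) : j ∈ R := by
  by_contra h
  exact hj.ne' (hq.eq_zero_of_notMem R j h)

end IsDistribution

variable [Fintype ι] {μ : Finset ι → ℝ≥0} {q : Finset ι → ι → ℝ≥0}

def load (q : Finset ι → ι → ℝ≥0) (j : ι) : ℝ≥0 := ∑ R, q R j

def excess (t T : ι → ℝ≥0) (q : Finset ι → ι → ℝ≥0) (j : ι) : ℝ :=
  signedDist (t j) (T j) (load q j)

def potential (t T : ι → ℝ≥0) (q : Finset ι → ι → ℝ≥0) : ℝ := ∑ j, excess t T q j ^ 2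

theorem continuous_potential (t T : ι → ℝ≥0) : Continuous (potential (ι := ι) t T) := by
  unfold potential excess load
  fun_prop

theorem IsDistribution.sum_univ_eq (hq : IsDistribution μ q) {R : Finset ι} (hR : R.Nonempty) :
    ∑ j, q R j = μ R :=
  (sum_subset (subset_univ R) fun j _ hj => hq.eq_zero_of_notMem R j hj).symm.trans
    (hq.sum_eq R hR)

theorem IsDistribution.exists_transfer [DecidableEq ι] (hq : IsDistribution μ q)
    {R : Finset ι} {x y : ι} (hx : x ∈ R) (hy : y ∈ R) {ε : ℝ≥0} (hε : ε ≤ q R y) :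
    ∃ q', IsDistribution μ q' ∧
      ∀ j, load q' j + (if j = y then ε else 0) = load q j + (if j = x then ε else 0) := by
  set v : ι → ℝ≥0 := fun j => q R j + (if j = x then ε else 0) - (if j = y then ε else 0)
  have hv : ∀ j, v j + (if j = y then ε else 0) = q R j + (if j = x then ε else 0) := by
    intro j
    refine tsub_add_cancel_of_le ?_
    rcases eq_or_ne j y with rfl | hjy
    · simpa using le_add_right hε
    · simp [hjy]
  refine ⟨Function.update q R v, ⟨fun S j hj => ?_, fun S hS => ?_⟩, fun j => ?_⟩
  · rcases eq_or_ne S R with rfl | hSR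
    · have hjx : j ≠ x := by rintro rfl; exact hj hx
      simp [v, hjx, hq.eq_zero_of_notMem S j hj]
    · simpa [hSR] using hq.eq_zero_of_notMem S j hj
  · rcases eq_or_ne S R with rfl | hSR
    · refine add_right_cancel (b := ε) ?_
      have := sum_congr rfl fun j (_ : j ∈ S) => hv j
      simp only [sum_add_distrib, sum_ite_eq', hx, hy, if_true] at this
      simpa [hq.sum_eq S hS] using this
    · simpa [hSR] using hq.sum_eq S hS
  · simp only [load, ← add_sum_erase univ _ (mem_univ R), Function.update_self]
    rw [add_right_comm, hv, add_right_comm]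
    congr 2
    exact sum_congr rfl fun S hS => by rw [Function.update_of_ne (ne_of_mem_erase hS)]

theorem IsDistribution.sum_meeting_le_sum_load [DecidableEq ι] (hq : IsDistribution μ q)
    {A : Finset ι} (hA : ∀ x y, Transferable q y x → x ∈ A → y ∈ A) :
    ∑ R ∈ univ.filter (fun R : Finset ι => (R ∩ A).Nonempty), μ R ≤ ∑ j ∈ A, load q j :=
  calc ∑ R ∈ univ.filter (fun R : Finset ι => (R ∩ A).Nonempty), μ R
      = ∑ R ∈ univ.filter (fun R : Finset ι => (R ∩ A).Nonempty), ∑ j ∈ A, q R j := by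
        refine sum_congr rfl fun R hR => ?_
        obtain ⟨x, hx⟩ := (mem_filter.1 hR).2
        rw [mem_inter] at hx
        rw [← hq.sum_univ_eq ⟨x, hx.1⟩]
        refine (sum_subset (subset_univ A) fun y _ hy => ?_).symm
        by_contra h
        exact hy (hA x y ⟨R, hx.1, pos_of_ne_zero h⟩ hx.2)
    _ ≤ ∑ R, ∑ j ∈ A, q R j := sum_le_sum_of_subset (filter_subset _ _)
    _ = ∑ j ∈ A, load q j := sum_comm

theorem IsDistribution.sum_load_le_sum_contained (hq : IsDistribution μ q)
    {B : Finset ι} (hB : ∀ x y, Transferable q y x → y ∈ B → x ∈ B) :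
    ∑ j ∈ B, load q j ≤ ∑ R ∈ B.powerset.filter (fun R : Finset ι => R.Nonempty), μ R :=
  calc ∑ j ∈ B, load q j
      = ∑ R ∈ B.powerset.filter (fun R : Finset ι => R.Nonempty), ∑ j ∈ B, q R j := by
        simp only [load]
        rw [sum_comm]
        refine (sum_subset (subset_univ _) fun R _ hR => sum_eq_zero fun y hy => ?_).symm
        by_contra h
        have hpos := pos_of_ne_zero h
        exact hR (mem_filter.2 ⟨mem_powerset.2 fun x hx => hB x y ⟨R, hx, hpos⟩ hy,
          ⟨y, hq.mem_of_pos hpos⟩⟩)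
    _ ≤ ∑ R ∈ B.powerset.filter (fun R : Finset ι => R.Nonempty), μ R :=
        sum_le_sum fun R hR => (sum_le_sum_of_subset (subset_univ B)).trans
          (hq.sum_univ_eq (mem_filter.1 hR).2).le

section Minimizer

variable {t T : ι → ℝ≥0} (htT : ∀ j, t j ≤ T j) (hq : IsDistribution μ q)
  (hmin : IsMinOn (potential t T) {q | IsDistribution μ q} q)
include htT hq hmin

/-- At a minimiser no load can be moved to a resource with smaller excess: moving `ε` changes
the potential by at most `2ε (ε - (excess y - excess x))`. -/
theorem excess_le_of_transferable {x y : ι} (hyx : Transferable q y x) :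
    excess t T q y ≤ excess t T q x := by
  classical
  obtain ⟨R, hx, hpos⟩ := hyx
  by_contra! hlt
  have hxy : x ≠ y := by rintro rfl; exact lt_irrefl _ hlt
  set ε : ℝ≥0 := min (q R y) ((excess t T q y - excess t T q x) / 2).toNNReal
  have hε : 0 < ε := lt_min hpos (Real.toNNReal_pos.2 (by linarith))
  have hεδ : (ε : ℝ) ≤ (excess t T q y - excess t T q x) / 2 :=
    (NNReal.coe_le_coe.2 (min_le_right _ _)).trans (Real.coe_toNNReal _ (by linarith)).le
  obtain ⟨q', hq', hload⟩ := hq.exists_transfer hx (hq.mem_of_pos hpos) (ε := ε) (min_le_left _ _)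
  have hx' : excess t T q' x ^ 2 ≤ (excess t T q x + ε) ^ 2 := by
    have := hload x
    rw [if_neg hxy, if_pos rfl, add_zero] at this
    rw [excess, excess, this, NNReal.coe_add]
    exact signedDist_add_sq_le (htT x) _ _
  have hy' : excess t T q' y ^ 2 ≤ (excess t T q y + -ε) ^ 2 := by
    have := hload y
    rw [if_pos rfl, if_neg hxy.symm, add_zero] at this
    have hy : (load q y : ℝ) = load q' y + ε := by rw [← this, NNReal.coe_add]
    have h := signedDist_add_sq_le (htT y) (load q y) (-ε)
    rwa [hy, add_neg_cancel_right, ← hy] at h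
  have hsplit : potential t T q' - potential t T q =
      (excess t T q' x ^ 2 - excess t T q x ^ 2) + (excess t T q' y ^ 2 - excess t T q y ^ 2) := by
    rw [potential, potential, ← sum_sub_distrib]
    refine Fintype.sum_eq_add x y hxy fun j ⟨hjx, hjy⟩ => ?_
    have := hload j
    simp only [if_neg hjx, if_neg hjy, add_zero] at this
    simp [excess, this]
  have : potential t T q' < potential t T q := by
    nlinarith [mul_le_mul_of_nonneg_left hεδ (NNReal.coe_nonneg ε), NNReal.coe_pos.2 hε]
  exact (hmin hq').not_gt this

theorem excess_le_of_reflTransGen {a b : ι} (h : ReflTransGen (Transferable q) a b) :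
    excess t T q a ≤ excess t T q b := by
  induction h with
  | refl => exact le_rfl
  | tail _ hbc ih => exact ih.trans (excess_le_of_transferable htT hq hmin hbc)

theorem le_load_of_isMinOn [DecidableEq ι] (hM : ∀ S : Finset ι, S.Nonempty →
      ∑ j ∈ S, t j ≤ ∑ R ∈ univ.filter (fun R : Finset ι => (R ∩ S).Nonempty), μ R)
    (j₀ : ι) : t j₀ ≤ load q j₀ := by
  classical
  by_contra! h₀
  set A := univ.filter fun j => ReflTransGen (Transferable q) j j₀
  have hj₀ : j₀ ∈ A := mem_filter.2 ⟨mem_univ _, .refl⟩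
  have hA : ∀ j ∈ A, load q j < t j := fun j hj => by
    have hneg : excess t T q j₀ < 0 := signedDist_neg_iff.2 (by exact_mod_cast h₀)
    exact_mod_cast signedDist_neg_iff.1
      ((excess_le_of_reflTransGen htT hq hmin (mem_filter.1 hj).2).trans_lt hneg)
  have hcut := hq.sum_meeting_le_sum_load (A := A) fun x y hyx hx =>
    mem_filter.2 ⟨mem_univ _, .head hyx (mem_filter.1 hx).2⟩
  exact (sum_lt_sum_of_nonempty ⟨j₀, hj₀⟩ hA).not_ge ((hM A ⟨j₀, hj₀⟩).trans hcut)

theorem load_le_of_isMinOn (hm : ∀ S : Finset ι, S.Nonempty →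
      ∑ R ∈ S.powerset.filter (fun R : Finset ι => R.Nonempty), μ R ≤ ∑ j ∈ S, T j)
    (j₀ : ι) : load q j₀ ≤ T j₀ := by
  classical
  by_contra! h₀
  set B := univ.filter fun j => ReflTransGen (Transferable q) j₀ j
  have hj₀ : j₀ ∈ B := mem_filter.2 ⟨mem_univ _, .refl⟩
  have hB : ∀ j ∈ B, T j < load q j := fun j hj => by
    have hpos : 0 < excess t T q j₀ := (signedDist_pos_iff (by exact_mod_cast htT j₀)).2
      (by exact_mod_cast h₀)
    exact_mod_cast (signedDist_pos_iff (by exact_mod_cast htT j)).1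
      (hpos.trans_le (excess_le_of_reflTransGen htT hq hmin (mem_filter.1 hj).2))
  have hcut := hq.sum_load_le_sum_contained (B := B) fun x y hyx hy =>
    mem_filter.2 ⟨mem_univ _, .tail (mem_filter.1 hy).2 hyx⟩
  exact (sum_lt_sum_of_nonempty ⟨j₀, hj₀⟩ hB).not_ge (hcut.trans (hm B ⟨j₀, hj₀⟩))

end Minimizer

end DistributionConstraint

open DistributionConstraint

/-- Every normal distribution constraint is satisfiable:
given masses `μ R ≥ 0` for the nonempty types `R ⊆ {1,…,n}` and intervals
`[t j, T j] ⊆ [0,∞)`, if for every nonempty `S ⊆ {1,…,n}` both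
`t_C(S) = Σ_{j∈S} t j ≤ M_C(S) = Σ {μ R : R ∩ S ≠ ∅}` and
`m_C(S) = Σ {μ R : ∅ ≠ R ⊆ S} ≤ T_C(S) = Σ_{j∈S} T j`, then there is a
distribution `q` of the mass of each nonempty type `R` among the resources of
`R` whose total load on each resource `j` lies in `[t j, T j]`. -/
theorem normal_constraint_satisfiable (n : ℕ)
    (μ : Finset (Fin n) → ℝ≥0) (t T : Fin n → ℝ≥0)
    (htT : ∀ j, t j ≤ T j)
    (hnormal : ∀ S : Finset (Fin n), S.Nonempty →
      (∑ j ∈ S, t j ≤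
        ∑ R ∈ Finset.univ.filter (fun R : Finset (Fin n) => (R ∩ S).Nonempty), μ R) ∧
      (∑ R ∈ S.powerset.filter (fun R : Finset (Fin n) => R.Nonempty), μ R ≤
        ∑ j ∈ S, T j)) :
    ∃ q : Finset (Fin n) → Fin n → ℝ≥0,
      (∀ R : Finset (Fin n), ∀ j : Fin n, j ∉ R → q R j = 0) ∧
      (∀ R : Finset (Fin n), R.Nonempty → ∑ j ∈ R, q R j = μ R) ∧
      (∀ j : Fin n,
        t j ≤ ∑ R : Finset (Fin n), q R j ∧ (∑ R : Finset (Fin n), q R j) ≤ T j) := by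
  obtain ⟨q, hq, hmin⟩ := (isCompact_setOf_isDistribution μ).exists_isMinOn
    (exists_isDistribution μ) (continuous_potential t T).continuousOn
  exact ⟨q, hq.eq_zero_of_notMem, hq.sum_eq, fun j =>
    ⟨le_load_of_isMinOn htT hq hmin (fun S hS => (hnormal S hS).1) j,
      load_le_of_isMinOn htT hq hmin (fun S hS => (hnormal S hS).2) j⟩⟩
end
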